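/- arXiv:2410.05792 — 13 statements merged into one kernel-verified Lean document; each statement's English description precedes it below -/
import Mathlib

section
/- Let k be a field, R = k⟦t⟧ the ring of formal power series, and K = k((t)) its field of Laurent series. Let H be an R-algebra which is finitely generated and torsion-free as an R-module and such that K ⊗_R H is a semisimple ring. Let J be the Jacobson radical of H, π : H → H/J the projection, Λ a k-subalgebra of H/J which is a semisimple ring, and A = π⁻¹(Λ) ⊆ H. Then J is contained in A and the Jacobson radical of the ring A equals J. -/
open scoped TensorProduct

/-- The Jacobson radical of a (possibly noncommutative) ring `H`, described as the set of
`h ∈ H` such that `1 + b * h * c` is a unit for all `b, c ∈ H`. -/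
def jacobsonRadicalSet (H : Type*) [Ring H] : Set H :=
  {h : H | ∀ b c : H, IsUnit (1 + b * h * c)}

/-- In a semisimple ring, any element of the Jacobson radical is zero. -/
theorem semisimple_radical_elem_eq_zero {L : Type*} [Ring L] [IsSemisimpleRing L]
    (x : L) (hx : ∀ b c : L, IsUnit (1 + b * x * c)) : x = 0 := by
  obtain ⟨q, hq⟩ := exists_isCompl (Submodule.span L ({x} : Set L))
  have h1 : (1 : L) ∈ Submodule.span L ({x} : Set L) ⊔ q := by
    rw [hq.sup_eq_top]; trivial
  obtain ⟨e, he, f, hf, hef⟩ := Submodule.mem_sup.mp h1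
  obtain ⟨b, hb⟩ := Submodule.mem_span_singleton.mp he
  have he2 : e = b * x := by rw [← hb, smul_eq_mul]
  have hfeq : f = 1 + (-b) * x * 1 := by
    rw [mul_one, neg_mul, ← he2, ← sub_eq_add_neg, eq_sub_iff_add_eq']
    exact hef
  have hu : IsUnit f := hfeq ▸ hx (-b) 1
  obtain ⟨v, hv1, hv2⟩ := isUnit_iff_exists.mp hu
  have h1q : (1 : L) ∈ q := by
    rw [← hv2]
    simpa [smul_eq_mul] using q.smul_mem v hf
  have hqtop : q = ⊤ := by
    rw [Submodule.eq_top_iff']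
    intro y
    simpa using q.smul_mem y h1q
  have : Submodule.span L ({x} : Set L) = ⊥ := by
    have := hq.disjoint
    rw [hqtop, disjoint_top] at this
    exact this
  have hx0 : x ∈ (⊥ : Submodule L L) := this ▸ Submodule.mem_span_singleton_self x
  simpa using hx0

/-- Let `R = k⟦t⟧`, `K = k((t))`, and `H` an `R`-order (finitely generated
torsion-free `R`-module with `K ⊗_R H` semisimple). Let `J` be the Jacobson radical of `H`,
`π : H → H/J` the projection (encoded as a surjective algebra map with kernel `J`), `Λ` a
semisimple `k`-subalgebra of `H/J`, and `A = π⁻¹(Λ)`. Then `J ⊆ A` and the Jacobson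
radical of `A` equals `J`. -/
theorem jacobson_radical_of_pullback_order
    (k : Type*) [Field k]
    (H : Type*) [Ring H] [Algebra (PowerSeries k) H]
    [Algebra k H] [IsScalarTower k (PowerSeries k) H]
    [Module.Finite (PowerSeries k) H] [NoZeroSMulDivisors (PowerSeries k) H]
    [IsSemisimpleRing (LaurentSeries k ⊗[PowerSeries k] H)]
    (Hbar : Type*) [Ring Hbar] [Algebra k Hbar]
    (π : H →ₐ[k] Hbar) (hπ : Function.Surjective π)
    (hker : ∀ x : H, π x = 0 ↔ x ∈ jacobsonRadicalSet H)
    (Λ : Subalgebra k Hbar) [IsSemisimpleRing Λ]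
    (A : Subalgebra k H) (hA : A = Λ.comap π) :
    jacobsonRadicalSet H ⊆ (A : Set H) ∧
      (∀ a : A, (∀ b c : A, IsUnit (1 + b * a * c)) ↔ (a : H) ∈ jacobsonRadicalSet H) := by
  have hmem : ∀ x : H, x ∈ A ↔ π x ∈ Λ := by
    intro x; rw [hA]; rfl
  have hJA : jacobsonRadicalSet H ⊆ (A : Set H) := by
    intro x hx
    have : π x = 0 := (hker x).mpr hx
    exact (hmem x).mpr (this ▸ Λ.zero_mem)
  refine ⟨hJA, fun a => ⟨fun h => ?_, fun ha b c => ?_⟩⟩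
  · -- forward: a is in the radical of A ⇒ π a lies in the radical of Λ ⇒ π a = 0
    have haΛ : π (a : H) ∈ Λ := (hmem _).mp a.2
    set x : Λ := ⟨π (a : H), haΛ⟩ with hxdef
    have hx : ∀ b' c' : Λ, IsUnit (1 + b' * x * c') := by
      intro b' c'
      obtain ⟨b, hb⟩ := hπ (b' : Hbar)
      obtain ⟨c, hc⟩ := hπ (c' : Hbar)
      have hbA : b ∈ A := (hmem b).mpr (hb ▸ b'.2)
      have hcA : c ∈ A := (hmem c).mpr (hc ▸ c'.2)
      obtain ⟨v, hv1, hv2⟩ := isUnit_iff_exists.mp (h ⟨b, hbA⟩ ⟨c, hcA⟩)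
      refine isUnit_iff_exists.mpr ⟨⟨π (v : H), (hmem _).mp v.2⟩, ?_, ?_⟩
      · apply Subtype.ext
        have : ((1 + (⟨b, hbA⟩ : A) * a * ⟨c, hcA⟩) * v : A) = 1 := hv1
        have := congrArg (fun z : A => π (z : H)) this
        simpa [hb, hc, mul_assoc] using this
      · apply Subtype.ext
        have : ((v * (1 + (⟨b, hbA⟩ : A) * a * ⟨c, hcA⟩)) : A) = 1 := hv2
        have := congrArg (fun z : A => π (z : H)) this
        simpa [hb, hc, mul_assoc] using this
    have hx0 : x = 0 := semisimple_radical_elem_eq_zero x hx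
    have : π (a : H) = 0 := congrArg Subtype.val hx0
    exact (hker _).mp this
  · -- backward: a ∈ J ⇒ 1 + b a c is a unit in A
    obtain ⟨v, hv1, hv2⟩ := isUnit_iff_exists.mp (ha (b : H) (c : H))
    have hπa : π (a : H) = 0 := (hker _).mpr ha
    have hπu : π (1 + (b : H) * (a : H) * (c : H)) = 1 := by
      simp [hπa]
    have hπv : π v = 1 := by
      have := congrArg π hv2
      rw [map_mul, hπu, mul_one, map_one] at this
      exact this
    have hvA : v ∈ A := (hmem v).mpr (hπv ▸ Λ.one_mem)
    refine isUnit_iff_exists.mpr ⟨⟨v, hvA⟩, ?_, ?_⟩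
    · exact Subtype.ext hv1
    · exact Subtype.ext hv2
end

section
/- Let F be a division ring which is finite-dimensional over its center, and let n ≥ 1. Then every ring automorphism φ of the matrix ring Mₙ(F) can be written as φ = Ad_a ∘ ψ̂, where a is an invertible element of Mₙ(F), Ad_a denotes conjugation x ↦ a x a⁻¹, ψ is a ring automorphism of F, and ψ̂ is the automorphism of Mₙ(F) applying ψ to each matrix entry. -/
/-!
The images `f i j = φ (single i j 1)` again form a system of matrix units. Fix a pivot `p` and
let `u` be the matrix whose `l`-th column is the `c`-th column of `f l p`; then `f i j * u =
u * single i j 1`. A left inverse of `u` is assembled from the `f p j` and a nonzero entry of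
`f p p`, and `u` is a unit since matrix rings over a division ring are Dedekind-finite. Thus
`x ↦ u⁻¹ * φ x * u` fixes every matrix unit, hence maps their centralizer, the scalar matrices,
onto itself; this restriction is an automorphism `ψ` of `F`, and as
`single i j r = scalar r * single i j 1`, the conjugated map is `ψ` applied entrywise.
-/

namespace Matrix

variable {ι R : Type*} [Fintype ι] [DecidableEq ι]

section FixingMatrixUnits

variable [Semiring R]

theorem map_scalar_mem_range_scalar (θ : Matrix ι ι R →+* Matrix ι ι R)
    (hθ : ∀ i j, θ (single i j 1) = single i j 1) (r : R) :
    θ (scalar ι r) ∈ Set.range (scalar ι) :=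
  mem_range_scalar_iff_commute_single'.2 fun i j =>
    hθ i j ▸ (mem_range_scalar_iff_commute_single'.1 ⟨r, rfl⟩ i j).map θ

theorem exists_ringHom_map_scalar [Nonempty ι] (θ : Matrix ι ι R →+* Matrix ι ι R)
    (hθ : ∀ i j, θ (single i j 1) = single i j 1) :
    ∃ ψ : R →+* R, ∀ r, θ (scalar ι r) = scalar ι (ψ r) := by
  choose ψ hψ using map_scalar_mem_range_scalar θ hθ
  refine ⟨{ toFun := ψ, map_one' := ?_, map_mul' := ?_, map_zero' := ?_, map_add' := ?_ },
    fun r => (hψ r).symm⟩ <;> intros <;> apply (scalar_inj (n := ι)).1 <;>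
    simp only [hψ, map_one, map_mul, map_zero, map_add]

theorem scalar_mul_single_one (r : R) (i j : ι) :
    scalar ι r * single i j 1 = single i j r := by
  simp [← smul_eq_diagonal_mul]

theorem apply_eq_map_of_map_single_one (θ : Matrix ι ι R →+* Matrix ι ι R)
    (hθ : ∀ i j, θ (single i j 1) = single i j 1) (ψ : R →+* R)
    (hψ : ∀ r, θ (scalar ι r) = scalar ι (ψ r)) (x : Matrix ι ι R) :
    θ x = x.map ψ := by
  have hsingle : ∀ i j r, θ (single i j r) = single i j (ψ r) := fun i j r => by
    rw [← scalar_mul_single_one r, map_mul, hθ, hψ, scalar_mul_single_one]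
  have hadd : (θ : Matrix ι ι R →+ Matrix ι ι R) =
      ((ψ.mapMatrix : Matrix ι ι R →+* Matrix ι ι R) : Matrix ι ι R →+ Matrix ι ι R) :=
    ext_addMonoidHom fun i j => AddMonoidHom.ext fun r =>
      (hsingle i j r).trans (map_single i j r ψ).symm
  exact DFunLike.congr_fun hadd x

theorem exists_ringEquiv_eq_map_of_map_single_one [Nonempty ι]
    (θ : Matrix ι ι R ≃+* Matrix ι ι R) (hθ : ∀ i j, θ (single i j 1) = single i j 1) :
    ∃ ψ : R ≃+* R, ∀ x, θ x = x.map ψ := by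
  have hθ' : ∀ i j, θ.symm (single i j 1) = single i j 1 := fun i j =>
    θ.symm_apply_eq.2 (hθ i j).symm
  obtain ⟨ψ, hψ⟩ := exists_ringHom_map_scalar (θ : Matrix ι ι R →+* Matrix ι ι R) hθ
  obtain ⟨ψ', hψ'⟩ := exists_ringHom_map_scalar (θ.symm : Matrix ι ι R →+* Matrix ι ι R) hθ'
  refine ⟨RingEquiv.ofRingHom ψ ψ' ?_ ?_, apply_eq_map_of_map_single_one _ hθ ψ hψ⟩ <;>
    ext r <;> apply (scalar_inj (n := ι)).1 <;> simp [← hψ', ← hψ]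

end FixingMatrixUnits

section Intertwiner

variable [Semiring R] (φ : Matrix ι ι R →+* Matrix ι ι R)

theorem map_single_one_mul_map_single_one (i j k l : ι) :
    φ (single i j 1) * φ (single k l 1) = if j = k then φ (single i l 1) else 0 := by
  rw [← map_mul]
  split_ifs with h
  · rw [h, single_mul_single_same, one_mul]
  · rw [single_mul_single_of_ne _ _ _ _ h, map_zero]

def intertwiner (p c : ι) : Matrix ι ι R :=
  ∑ l, φ (single l p 1) * single c l 1

theorem map_single_one_mul_intertwiner (p c i j : ι) :
    φ (single i j 1) * intertwiner φ p c = intertwiner φ p c * single i j 1 := by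
  have hleft : ∀ l, φ (single i j 1) * (φ (single l p 1) * single c l 1) =
      if j = l then φ (single i p 1) * single c j 1 else 0 := fun l => by
    rw [← mul_assoc, map_single_one_mul_map_single_one]
    split_ifs with h <;> simp [h]
  have hright : ∀ l, φ (single l p 1) * single c l 1 * single i j 1 =
      if i = l then φ (single i p 1) * single c j 1 else 0 := fun l => by
    rw [mul_assoc]
    split_ifs with h
    · rw [h, single_mul_single_same, one_mul]
    · rw [single_mul_single_of_ne _ _ _ _ (Ne.symm h), mul_zero]
  simp only [intertwiner, Finset.mul_sum, Finset.sum_mul, hleft, hright, Finset.sum_ite_eq,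
    Finset.mem_univ, if_true]

theorem sum_single_one_mul_map_mul_intertwiner (p k c : ι) :
    (∑ j, single j k 1 * φ (single p j 1)) * intertwiner φ p c =
      scalar ι (φ (single p p 1) k c) := by
  have hterm : ∀ j l, single j k 1 * φ (single p j 1) * (φ (single l p 1) * single c l 1) =
      if j = l then single j j (φ (single p p 1) k c) else 0 := fun j l => by
    rw [mul_assoc, ← mul_assoc (φ _), map_single_one_mul_map_single_one]
    split_ifs with h
    · rw [h, ← mul_assoc, single_mul_mul_single, one_mul, mul_one]
    · rw [zero_mul, mul_zero]
  simp only [intertwiner, Finset.sum_mul_sum, hterm, Finset.sum_ite_eq, Finset.mem_univ, if_true,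
    sum_single_eq_diagonal, scalar_apply]

end Intertwiner

section DivisionRing

variable {F : Type*} [DivisionRing F]

theorem exists_unit_map_single_one_mul_eq [Nonempty ι] (φ : Matrix ι ι F →+* Matrix ι ι F)
    (hφ : Function.Injective φ) :
    ∃ a : (Matrix ι ι F)ˣ, ∀ i j, φ (single i j 1) * a.val = a.val * single i j 1 := by
  obtain ⟨p⟩ := ‹Nonempty ι›
  have hpp : φ (single p p 1) ≠ 0 := (map_ne_zero_iff φ hφ).2 fun h => by
    simpa using congr_fun₂ h p p
  obtain ⟨k, c, hkc⟩ : ∃ k c, φ (single p p 1) k c ≠ 0 := by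
    by_contra! h
    exact hpp (Matrix.ext h)
  have hleft : (scalar ι (φ (single p p 1) k c)⁻¹ * ∑ j, single j k 1 * φ (single p j 1)) *
      intertwiner φ p c = 1 := by
    rw [mul_assoc, sum_single_one_mul_map_mul_intertwiner, ← map_mul, inv_mul_cancel₀ hkc, map_one]
  exact ⟨(IsUnit.of_mul_eq_one_right _ hleft).unit, map_single_one_mul_intertwiner φ p c⟩

theorem exists_unit_ringEquiv_eq_conj_map [Nonempty ι] (φ : Matrix ι ι F ≃+* Matrix ι ι F) :
    ∃ (a : (Matrix ι ι F)ˣ) (ψ : F ≃+* F), ∀ x, φ x = a.val * x.map ψ * (a⁻¹).val := by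
  obtain ⟨a, ha⟩ : ∃ a : (Matrix ι ι F)ˣ, ∀ i j, φ (single i j 1) * a.val = a.val * single i j 1 :=
    exists_unit_map_single_one_mul_eq (φ : Matrix ι ι F →+* Matrix ι ι F) φ.injective
  let θ := φ.trans (MulSemiringAction.toRingEquiv _ _ (ConjAct.toConjAct a⁻¹))
  have hθ : ∀ i j, θ (single i j 1) = single i j 1 := fun i j => by
    simp [θ, ConjAct.units_smul_def, mul_assoc, ha]
  obtain ⟨ψ, hψ⟩ := exists_ringEquiv_eq_map_of_map_single_one θ hθ
  refine ⟨a, ψ, fun x => ?_⟩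
  simp [← hψ, θ, ConjAct.units_smul_def, ← mul_assoc]

end DivisionRing

end Matrix

theorem matrix_ring_aut_eq_inner_comp_entrywise_general
    (F : Type*) [DivisionRing F]
    (n : ℕ) (hn : 1 ≤ n)
    (φ : Matrix (Fin n) (Fin n) F ≃+* Matrix (Fin n) (Fin n) F) :
    ∃ (a : (Matrix (Fin n) (Fin n) F)ˣ) (ψ : F ≃+* F),
      ∀ x : Matrix (Fin n) (Fin n) F,
        φ x = a.val * x.map ⇑ψ * (a⁻¹).val := by
  have : Nonempty (Fin n) := ⟨⟨0, hn⟩⟩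
  exact Matrix.exists_unit_ringEquiv_eq_conj_map φ

set_option maxHeartbeats 1000000 in
/-- Every ring automorphism of `Mₙ(F)`, for `F` a division ring
finite-dimensional over its center, is the composition of an inner automorphism with an
automorphism applied entrywise. -/
theorem matrix_ring_aut_eq_inner_comp_entrywise
    (F : Type*) [DivisionRing F] [FiniteDimensional (Subring.center F) F]
    (n : ℕ) (hn : 1 ≤ n)
    (φ : Matrix (Fin n) (Fin n) F ≃+* Matrix (Fin n) (Fin n) F) :
    ∃ (a : (Matrix (Fin n) (Fin n) F)ˣ) (ψ : F ≃+* F),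
      ∀ x : Matrix (Fin n) (Fin n) F,
        φ x = a.val * x.map ⇑ψ * (a⁻¹).val :=
  matrix_ring_aut_eq_inner_comp_entrywise_general F n hn φ
end

section
/- Let 𝕂 = ℝ((t)) and 𝕃 = ℂ((t)), and let G = Gal(𝕃/𝕂) be the Galois group of the extension 𝕃/𝕂; G = {e, σ} is cyclic of order 2, where σ acts on a Laurent series by applying complex conjugation to each coefficient: σ(Σ αₗ tˡ) = Σ ᾱₗ tˡ. Then the second group cohomology H²(G, 𝕃ˣ) of G with coefficients in the multiplicative group 𝕃ˣ (with the G-action induced by σ) is isomorphic to ℤ/2 × ℤ/2. -/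
/-- The coefficientwise inclusion `ℝ((t)) → ℂ((t))`, as a ring homomorphism. -/
noncomputable def LaurentSeries.ofRealRingHom : LaurentSeries ℝ →+* LaurentSeries ℂ where
  toFun x := x.map (Complex.ofRealHom : ℝ →+* ℂ)
  map_one' := HahnSeries.map_one (Complex.ofRealHom : ℝ →+* ℂ).toMonoidWithZeroHom
  map_mul' _ _ := HahnSeries.map_mul (Complex.ofRealHom : ℝ →ₙ+* ℂ)
  map_zero' := HahnSeries.map_zero ((Complex.ofRealHom : ℝ →+ ℂ).toZeroHom)
  map_add' _ _ := HahnSeries.map_add (Complex.ofRealHom : ℝ →+ ℂ)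

/-- `ℂ((t))` as an algebra over `𝕂 = ℝ((t))`, via the coefficientwise inclusion. -/
noncomputable instance : Algebra (LaurentSeries ℝ) (LaurentSeries ℂ) :=
  LaurentSeries.ofRealRingHom.toAlgebra

/-!
A `𝕂`-automorphism of `𝕃 = 𝕂(i)` is determined by the image of `i`, which is `±i`, so
`G = {1, conj}` is cyclic of order two and `H²(G, 𝕃ˣ) ≅ 𝕃ˣ^G / N(𝕃ˣ) = 𝕂ˣ / {y · conj y}`.
A norm `y · conj y` has order `2 · ord y` and leading coefficient `|lc y|² > 0`; conversely a real
Laurent series of even order with positive leading coefficient is a square in `𝕂`, by Hensel's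
lemma in `ℝ⟦t⟧`. Hence `f ↦ (ord f mod 2, sign of lc f)` identifies `𝕂ˣ / N(𝕃ˣ)` with
`ℤ/2 × ℤ/2`.
-/

universe u

namespace Rep.FiniteCyclicGroup

open CategoryTheory

variable {k G : Type u} [CommRing k] [CommGroup G] [Fintype G] {A : Rep k G} {g : G}

theorem groupCohomologyπEven_surjective (hg : ∀ x, x ∈ Subgroup.zpowers g) (i : ℕ) [NeZero i]
    (hi : Even i) : Function.Surjective (groupCohomologyπEven A g hg i hi) := by
  have h₁ : Epi (normHomCompSub A g).moduleCatCyclesIso.inv := inferInstance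
  have h₂ : Epi (normHomCompSub A g).homologyπ := inferInstance
  have h₃ : Epi (groupCohomologyIsoEven A g hg i hi).inv := inferInstance
  exact (ModuleCat.epi_iff_surjective _).mp
    (@epi_comp _ _ _ _ _ _ h₁ _ (@epi_comp _ _ _ _ _ _ h₂ _ h₃))

noncomputable def groupCohomologyEvenAddEquiv (hg : ∀ x, x ∈ Subgroup.zpowers g) (i : ℕ)
    [NeZero i] (hi : Even i) {B : Type*} [AddCommGroup B]
    (φ : LinearMap.ker (applyAsHom A g - 𝟙 A).hom.toLinearMap →+ B) (hφ : Function.Surjective φ)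
    (hker : ∀ x, φ x = 0 ↔ x.1 ∈ LinearMap.range A.norm.hom.toLinearMap) :
    groupCohomology A i ≃+ B :=
  let π := (groupCohomologyπEven A g hg i hi).hom.toAddMonoidHom
  have hker' : π.ker = φ.ker := by
    ext x
    simp only [AddMonoidHom.mem_ker, hker]
    exact groupCohomologyπEven_eq_zero_iff A g hg i hi x
  (QuotientAddGroup.quotientKerEquivOfSurjective π
    (groupCohomologyπEven_surjective hg i hi)).symm.trans <|
    (QuotientAddGroup.quotientAddEquivOfEq hker').trans <|
      QuotientAddGroup.quotientKerEquivOfSurjective φ hφ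

end Rep.FiniteCyclicGroup

namespace HahnSeries

variable {Γ R S F : Type*} [Zero R] [Zero S] [FunLike F R S] [ZeroHomClass F R S] {f : F}

theorem map_eq_zero_iff_of_injective [PartialOrder Γ] (hf : Function.Injective f)
    {x : HahnSeries Γ R} : x.map f = 0 ↔ x = 0 := by
  simp only [HahnSeries.ext_iff, funext_iff, map_coeff, coeff_zero, hf.eq_iff' (map_zero f)]

variable [LinearOrder Γ] [Zero Γ]

theorem order_map_of_injective (hf : Function.Injective f) (x : HahnSeries Γ R) :
    (x.map f).order = x.order := by
  rcases eq_or_ne x 0 with rfl | hx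
  · rw [(map_eq_zero_iff_of_injective hf).mpr rfl, order_zero, order_zero]
  have hfx : x.map f ≠ 0 := (map_eq_zero_iff_of_injective hf).not.mpr hx
  refine le_antisymm (order_le_of_coeff_ne_zero ?_) (order_le_of_coeff_ne_zero ?_)
  · simpa [hf.eq_iff' (map_zero f)] using hx
  · exact fun h => coeff_order_eq_zero.not.mpr hfx (by rw [map_coeff, h, map_zero])

theorem leadingCoeff_map_of_injective (hf : Function.Injective f) (x : HahnSeries Γ R) :
    (x.map f).leadingCoeff = f x.leadingCoeff := by
  rw [leadingCoeff_eq, leadingCoeff_eq, order_map_of_injective hf, map_coeff]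

end HahnSeries

theorem PowerSeries.exists_mul_self_eq {R : Type*} [CommRing R] (p : PowerSeries R) {c : R}
    (hc : c * c = constantCoeff p) (h2c : IsUnit (2 * c)) : ∃ q, q * q = p := by
  have hderiv : (Polynomial.X ^ 2 - Polynomial.C p).derivative.eval (C c) = C (2 * c) := by
    simp only [Polynomial.derivative_sub, Polynomial.derivative_X_sq, Polynomial.derivative_C,
      sub_zero, Polynomial.eval_mul, Polynomial.eval_ofNat, Polynomial.eval_X, map_mul, map_ofNat]
  obtain ⟨q, hq, -⟩ := HenselianRing.is_henselian (I := Ideal.span {X})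
    (Polynomial.X ^ 2 - Polynomial.C p) (Polynomial.monic_X_pow_sub_C p two_ne_zero) (C c)
    (by simp [Ideal.mem_span_singleton, X_dvd_iff, sq, hc])
    (by rw [hderiv]; exact (h2c.map C).map _)
  exact ⟨q, by simpa [sq, sub_eq_zero] using hq⟩

theorem LaurentSeries.exists_mul_self_eq {R : Type*} [CommRing R] {f : LaurentSeries R} {c : R}
    (hf : Even f.order) (hc : c * c = f.leadingCoeff) (h2c : IsUnit (2 * c)) :
    ∃ w, w * w = f := by
  obtain ⟨d, hd⟩ := hf
  obtain ⟨q, hq⟩ := f.powerSeriesPart.exists_mul_self_eq (c := c)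
    (by rw [hc, ← PowerSeries.coeff_zero_eq_constantCoeff_apply, powerSeriesPart_coeff,
      Nat.cast_zero, add_zero, HahnSeries.leadingCoeff_eq]) h2c
  refine ⟨HahnSeries.single d 1 * HahnSeries.ofPowerSeries ℤ R q, ?_⟩
  calc _ = HahnSeries.single (d + d) 1 * HahnSeries.ofPowerSeries ℤ R (q * q) := by
        rw [map_mul, mul_mul_mul_comm, HahnSeries.single_mul_single, mul_one]
    _ = f := by rw [hq, ← hd, single_order_mul_powerSeriesPart]

namespace LaurentSeries

open HahnSeries CategoryTheory

local notation "𝕂" => LaurentSeries ℝ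
local notation "𝕃" => LaurentSeries ℂ

@[simp]
theorem algebraMap_coeff (f : 𝕂) (n : ℤ) : (algebraMap 𝕂 𝕃 f).coeff n = f.coeff n := rfl

noncomputable def conj : 𝕃 ≃ₐ[𝕂] 𝕃 where
  toFun x := x.map (starRingEnd ℂ)
  invFun x := x.map (starRingEnd ℂ)
  left_inv x := by ext; simp
  right_inv x := by ext; simp
  map_mul' _ _ := HahnSeries.map_mul (starRingEnd ℂ : ℂ →ₙ+* ℂ)
  map_add' _ _ := HahnSeries.map_add (starRingEnd ℂ : ℂ →+ ℂ)
  commutes' f := by ext; simp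

@[simp]
theorem conj_coeff (x : 𝕃) (n : ℤ) : (conj x).coeff n = starRingEnd ℂ (x.coeff n) := rfl

theorem algebraMap_re_add_algebraMap_im_mul (x : 𝕃) :
    algebraMap 𝕂 𝕃 (x.map Complex.reLm) + algebraMap 𝕂 𝕃 (x.map Complex.imLm) * C Complex.I
      = x := by
  ext n
  simp [C_apply, coeff_mul_single_zero]

theorem algHom_ext_of_C_I {g g' : 𝕃 →ₐ[𝕂] 𝕃} (h : g (C Complex.I) = g' (C Complex.I)) :
    g = g' := by
  ext x
  rw [← algebraMap_re_add_algebraMap_im_mul x]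
  simp only [map_add, map_mul, AlgHom.commutes, h]

theorem C_I_mul_self : (C Complex.I : 𝕃) * C Complex.I = -1 := by
  rw [← map_mul, Complex.I_mul_I, map_neg, map_one]

theorem eq_refl_or_eq_conj (g : 𝕃 ≃ₐ[𝕂] 𝕃) : g = AlgEquiv.refl ∨ g = conj := by
  have hsq : (g (C Complex.I) + C Complex.I) * (g (C Complex.I) - C Complex.I) = 0 := by
    rw [← mul_self_sub_mul_self, ← map_mul, C_I_mul_self, map_neg, map_one, sub_self]
  rcases mul_eq_zero.mp hsq with h | h
  · right
    refine AlgEquiv.coe_toAlgHom_injective (algHom_ext_of_C_I ?_)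
    rw [AlgEquiv.coe_toAlgHom, AlgEquiv.coe_toAlgHom, eq_neg_of_add_eq_zero_left h]
    ext n
    simp only [C_apply, coeff_neg, conj_coeff, coeff_single]
    split_ifs <;> simp
  · left
    exact AlgEquiv.coe_toAlgHom_injective (algHom_ext_of_C_I (sub_eq_zero.mp h))

theorem conj_ne_refl : conj ≠ AlgEquiv.refl := fun h => by
  have h0 := congrArg (fun g : 𝕃 ≃ₐ[𝕂] 𝕃 => (g (C Complex.I)).coeff 0) h
  norm_num [C_apply, Complex.ext_iff] at h0

noncomputable instance : CommGroup (𝕃 ≃ₐ[𝕂] 𝕃) :=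
  { AlgEquiv.aut with
    mul_comm g h := by
      rcases eq_refl_or_eq_conj g with rfl | rfl <;>
        rcases eq_refl_or_eq_conj h with rfl | rfl <;> rfl }

instance : Finite (𝕃 ≃ₐ[𝕂] 𝕃) :=
  Finite.of_surjective (fun b : Bool => cond b conj AlgEquiv.refl) fun g => by
    rcases eq_refl_or_eq_conj g with rfl | rfl
    exacts [⟨false, rfl⟩, ⟨true, rfl⟩]

noncomputable instance : Fintype (𝕃 ≃ₐ[𝕂] 𝕃) := Fintype.ofFinite _

theorem mem_zpowers_conj (g : 𝕃 ≃ₐ[𝕂] 𝕃) : g ∈ Subgroup.zpowers conj := by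
  rcases eq_refl_or_eq_conj g with rfl | rfl
  exacts [one_mem _, Subgroup.mem_zpowers _]

noncomputable def signBit (r : ℝ) : ZMod 2 := if 0 < r then 0 else 1

theorem signBit_mul {a b : ℝ} (ha : a ≠ 0) (hb : b ≠ 0) :
    signBit (a * b) = signBit a + signBit b := by
  rcases ha.lt_or_gt with ha | ha <;> rcases hb.lt_or_gt with hb | hb <;>
    simp [signBit, mul_pos_iff, ha, hb, ha.not_gt, hb.not_gt, CharTwo.add_self_eq_zero]

noncomputable def paritySign (f : 𝕂) : ZMod 2 × ZMod 2 := (f.order, signBit f.leadingCoeff)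

theorem paritySign_mul {f g : 𝕂} (hf : f ≠ 0) (hg : g ≠ 0) :
    paritySign (f * g) = paritySign f + paritySign g := by
  simp only [paritySign, order_mul hf hg, leadingCoeff_mul, Int.cast_add, Prod.mk_add_mk,
    signBit_mul (leadingCoeff_ne_zero.mpr hf) (leadingCoeff_ne_zero.mpr hg)]

theorem paritySign_eq_zero_iff (f : 𝕂) :
    paritySign f = 0 ↔ Even f.order ∧ 0 < f.leadingCoeff := by
  simp [paritySign, signBit, Prod.ext_iff, ZMod.intCast_eq_zero_iff_even]

theorem exists_paritySign_eq (z : ZMod 2 × ZMod 2) : ∃ f : 𝕂, f ≠ 0 ∧ paritySign f = z := by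
  obtain ⟨a, b⟩ := z
  obtain rfl | rfl : b = 0 ∨ b = 1 := (by decide : ∀ b : ZMod 2, b = 0 ∨ b = 1) b
  · exact ⟨single (a.val : ℤ) 1, by simp, by simp [paritySign, signBit]⟩
  · exact ⟨-single (a.val : ℤ) 1, by simp,
      by simp [paritySign, signBit, order_neg, leadingCoeff_neg]⟩

theorem order_algebraMap (f : 𝕂) : (algebraMap 𝕂 𝕃 f).order = f.order :=
  order_map_of_injective Complex.ofReal_injective f

theorem leadingCoeff_algebraMap (f : 𝕂) :
    (algebraMap 𝕂 𝕃 f).leadingCoeff = f.leadingCoeff :=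
  leadingCoeff_map_of_injective Complex.ofReal_injective f

theorem order_conj (x : 𝕃) : (conj x).order = x.order :=
  order_map_of_injective (starRingEnd ℂ).injective x

theorem leadingCoeff_conj (x : 𝕃) : (conj x).leadingCoeff = starRingEnd ℂ x.leadingCoeff :=
  leadingCoeff_map_of_injective (starRingEnd ℂ).injective x

theorem map_reLm_algebraMap (f : 𝕂) : (algebraMap 𝕂 𝕃 f).map Complex.reLm = f := by
  ext n
  simp

theorem exists_algebraMap_eq_of_conj_eq {x : 𝕃} (hx : conj x = x) :
    ∃ f : 𝕂, algebraMap 𝕂 𝕃 f = x := by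
  refine ⟨x.map Complex.reLm, ?_⟩
  ext n
  simpa [Complex.conj_eq_iff_re] using congrArg (coeff · n) hx

theorem exists_mul_conj_eq_algebraMap_iff {f : 𝕂} (hf : f ≠ 0) :
    (∃ y : 𝕃, y * conj y = algebraMap 𝕂 𝕃 f) ↔ Even f.order ∧ 0 < f.leadingCoeff := by
  constructor
  · rintro ⟨y, hy⟩
    have hy0 : y ≠ 0 := by
      rintro rfl
      exact hf ((algebraMap 𝕂 𝕃).injective (by simpa using hy.symm))
    refine ⟨⟨y.order, ?_⟩, ?_⟩
    · rw [← order_algebraMap, ← hy, order_mul hy0 ((map_ne_zero conj).mpr hy0), order_conj]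
    · have hlc := congrArg leadingCoeff hy
      rw [leadingCoeff_mul, leadingCoeff_conj, Complex.mul_conj, leadingCoeff_algebraMap,
        Complex.ofReal_inj] at hlc
      exact hlc ▸ Complex.normSq_pos.mpr (leadingCoeff_ne_zero.mpr hy0)
  · rintro ⟨heven, hpos⟩
    obtain ⟨w, hw⟩ := exists_mul_self_eq heven (Real.mul_self_sqrt hpos.le)
      (isUnit_iff_ne_zero.mpr (by positivity))
    exact ⟨algebraMap 𝕂 𝕃 w, by rw [conj.commutes, ← map_mul, hw]⟩

theorem paritySign_map_reLm_mul {x y : 𝕃} (hx : conj x = x) (hy : conj y = y) (hx0 : x ≠ 0)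
    (hy0 : y ≠ 0) : paritySign ((x * y).map Complex.reLm) =
      paritySign (x.map Complex.reLm) + paritySign (y.map Complex.reLm) := by
  obtain ⟨f, rfl⟩ := exists_algebraMap_eq_of_conj_eq hx
  obtain ⟨g, rfl⟩ := exists_algebraMap_eq_of_conj_eq hy
  rw [← map_mul, map_reLm_algebraMap, map_reLm_algebraMap, map_reLm_algebraMap]
  exact paritySign_mul (by rintro rfl; simp at hx0) (by rintro rfl; simp at hy0)

theorem paritySign_map_reLm_eq_zero_iff {x : 𝕃} (hx : conj x = x) (hx0 : x ≠ 0) :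
    paritySign (x.map Complex.reLm) = 0 ↔ ∃ y, y * conj y = x := by
  obtain ⟨f, rfl⟩ := exists_algebraMap_eq_of_conj_eq hx
  rw [map_reLm_algebraMap, paritySign_eq_zero_iff,
    exists_mul_conj_eq_algebraMap_iff (by rintro rfl; simp at hx0)]

theorem mem_ker_applyAsHom_conj_sub_one_iff (x : Rep.ofAlgebraAutOnUnits 𝕂 𝕃) :
    x ∈ LinearMap.ker (Rep.applyAsHom (Rep.ofAlgebraAutOnUnits 𝕂 𝕃) conj -
      𝟙 (Rep.ofAlgebraAutOnUnits 𝕂 𝕃)).hom.toLinearMap ↔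
    conj ((Additive.toMul x : 𝕃ˣ) : 𝕃) = (Additive.toMul x : 𝕃ˣ) := by
  rw [LinearMap.mem_ker]
  change (Rep.ofAlgebraAutOnUnits 𝕂 𝕃).ρ conj x - x = 0 ↔ _
  rw [sub_eq_zero]
  exact ⟨fun h => congrArg (fun y => ((Additive.toMul y : 𝕃ˣ) : 𝕃)) h,
    fun h => congrArg Additive.ofMul (Units.ext h)⟩

theorem toMul_norm_ofAlgebraAutOnUnits_apply (x : Rep.ofAlgebraAutOnUnits 𝕂 𝕃) :
    ((Additive.toMul ((Rep.ofAlgebraAutOnUnits 𝕂 𝕃).norm.hom.toLinearMap x) : 𝕃ˣ) : 𝕃) =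
      (Additive.toMul x : 𝕃ˣ) * conj (Additive.toMul x : 𝕃ˣ) := by
  change ((Additive.toMul ((∑ g, (Rep.ofAlgebraAutOnUnits 𝕂 𝕃).ρ g) x) : 𝕃ˣ) : 𝕃) = _
  rw [LinearMap.sum_apply, Fintype.sum_eq_add 1 conj conj_ne_refl.symm]
  · rfl
  · intro g hg
    exact absurd (eq_refl_or_eq_conj g) (by tauto)

theorem mem_range_norm_ofAlgebraAutOnUnits_iff (x : Rep.ofAlgebraAutOnUnits 𝕂 𝕃) :
    x ∈ LinearMap.range (Rep.ofAlgebraAutOnUnits 𝕂 𝕃).norm.hom.toLinearMap ↔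
    ∃ y : 𝕃, y * conj y = (Additive.toMul x : 𝕃ˣ) := by
  constructor
  · rintro ⟨y, rfl⟩
    exact ⟨((Additive.toMul y : 𝕃ˣ) : 𝕃), (toMul_norm_ofAlgebraAutOnUnits_apply y).symm⟩
  · rintro ⟨y, hy⟩
    have hy0 : y ≠ 0 := left_ne_zero_of_mul (hy ▸ Units.ne_zero _)
    exact ⟨Additive.ofMul (Units.mk0 y hy0),
      congrArg Additive.ofMul (Units.ext ((toMul_norm_ofAlgebraAutOnUnits_apply _).trans hy))⟩

-- A `conj`-fixed unit is the image of its coefficientwise real part, a unit of `𝕂`.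
noncomputable def kerToParitySign :
    LinearMap.ker (Rep.applyAsHom (Rep.ofAlgebraAutOnUnits 𝕂 𝕃) conj -
      𝟙 (Rep.ofAlgebraAutOnUnits 𝕂 𝕃)).hom.toLinearMap →+ ZMod 2 × ZMod 2 where
  toFun x := paritySign (((Additive.toMul x.1 : 𝕃ˣ) : 𝕃).map Complex.reLm)
  map_zero' := by
    show paritySign ((1 : 𝕃).map Complex.reLm) = 0
    rw [← map_one (algebraMap 𝕂 𝕃), map_reLm_algebraMap]
    simp [paritySign, signBit]
  map_add' x y :=
    paritySign_map_reLm_mul ((mem_ker_applyAsHom_conj_sub_one_iff _).mp x.2)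
      ((mem_ker_applyAsHom_conj_sub_one_iff _).mp y.2)
      (Units.ne_zero _) (Units.ne_zero _)

theorem kerToParitySign_surjective : Function.Surjective kerToParitySign := by
  intro z
  obtain ⟨f, hf, rfl⟩ := exists_paritySign_eq z
  refine ⟨⟨Additive.ofMul (Units.mk0 (algebraMap 𝕂 𝕃 f) (by simpa using hf)),
    (mem_ker_applyAsHom_conj_sub_one_iff _).mpr (conj.commutes f)⟩, ?_⟩
  show paritySign ((algebraMap 𝕂 𝕃 f).map Complex.reLm) = _
  rw [map_reLm_algebraMap]

theorem kerToParitySign_eq_zero_iff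
    (x : LinearMap.ker (Rep.applyAsHom (Rep.ofAlgebraAutOnUnits 𝕂 𝕃) conj -
      𝟙 (Rep.ofAlgebraAutOnUnits 𝕂 𝕃)).hom.toLinearMap) :
    kerToParitySign x = 0 ↔
      x.1 ∈ LinearMap.range (Rep.ofAlgebraAutOnUnits 𝕂 𝕃).norm.hom.toLinearMap :=
  (paritySign_map_reLm_eq_zero_iff ((mem_ker_applyAsHom_conj_sub_one_iff _).mp x.2)
    (Units.ne_zero _)).trans
    (mem_range_norm_ofAlgebraAutOnUnits_iff _).symm

end LaurentSeries

open LaurentSeries in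
/-- Let `𝕂 = ℝ((t))`, `𝕃 = ℂ((t))` and `G = Gal(𝕃/𝕂)`; every element of `G`
is the identity or acts by conjugating each coefficient, and the second group cohomology
`H²(G, 𝕃ˣ)` is isomorphic to `ℤ/2 × ℤ/2`. -/
theorem h2_of_galois_group_of_complex_laurent_series :
    (∀ g : LaurentSeries ℂ ≃ₐ[LaurentSeries ℝ] LaurentSeries ℂ,
      g = AlgEquiv.refl ∨
        ∀ (x : LaurentSeries ℂ) (n : ℤ), (g x).coeff n = (starRingEnd ℂ) (x.coeff n)) ∧
    Nonempty (groupCohomology.H2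
      (Rep.ofAlgebraAutOnUnits (LaurentSeries ℝ) (LaurentSeries ℂ)) ≃+ (ZMod 2 × ZMod 2)) :=
  ⟨fun g => (eq_refl_or_eq_conj g).imp_right fun h x n => by rw [h, conj_coeff],
    ⟨Rep.FiniteCyclicGroup.groupCohomologyEvenAddEquiv mem_zpowers_conj 2 even_two
      kerToParitySign kerToParitySign_surjective kerToParitySign_eq_zero_iff⟩⟩
end

section
/- Let 𝕂 = ℝ((t)) be the field of formal Laurent series over ℝ. For v ∈ 𝕂, let H(−1, v) denote the quaternion 𝕂-algebra generated by i, j with relations i² = −1, j² = v, ij = −ji. Then the three algebras H(−1, −1), H(−1, t) and H(−1, −t) are division rings, and they are pairwise non-isomorphic as 𝕂-algebras. -/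
/-!
A nonzero sum of squares in `ℝ((t))` has even order, because positive leading coefficients
cannot cancel; hence `ℝ((t))` is formally real and `±t`, of order one, are not sums of squares.

If the reduced norm `(x₀² + x₁²) - b (x₂² + x₃²)` of `x ≠ 0` in `H(-1, b)` vanishes, then `b` is
a quotient of sums of squares, so `H(-1, b)` is a division ring whenever `b` is not a sum of
squares: this covers `b = -1, t, -t`.

An isomorphism onto `H(-1, b)` yields a square root of `b` (the preimage of `j`). As `2 ≠ 0`, a
quaternion whose square is a scalar is either scalar or pure, and comparing its square with the
norm form shows that `±t` has no square root in `H(-1, -1)`, nor `-t` in `H(-1, t)`.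
-/

theorem IsSumSq.of_eq_mul {R : Type*} [Field R] {b A B : R} (hA : IsSumSq A) (hB : IsSumSq B)
    (hB0 : B ≠ 0) (h : A = b * B) : IsSumSq b := by
  have hb : b = A * B * (B⁻¹ * B⁻¹) := by rw [h]; field_simp
  exact hb ▸ (hA.mul hB).mul (.mul_self _)

namespace IsFormallyReal

variable {R : Type*} [Ring R] [IsFormallyReal R]

theorem eq_zero_of_mul_self_add_mul_self_eq_zero {x y : R} (h : x * x + y * y = 0) :
    x = 0 ∧ y = 0 :=
  have hx := eq_zero_of_add_right (.mul_self x) (.mul_self y) h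
  have hy := eq_zero_of_add_left (.mul_self x) (.mul_self y) h
  ⟨IsReduced.eq_zero x ⟨2, by rwa [sq]⟩, IsReduced.eq_zero y ⟨2, by rwa [sq]⟩⟩

theorem not_isSumSq_neg_one [Nontrivial R] : ¬IsSumSq (-1 : R) := fun h =>
  one_ne_zero (eq_zero_of_isSumSq_of_neg_isSumSq .one h)

end IsFormallyReal

namespace HahnSeries

variable {Γ R : Type*} [AddCommMonoid Γ] [LinearOrder Γ] [Ring R] [LinearOrder R]
  [IsStrictOrderedRing R]

theorem even_order_add_of_leadingCoeff_pos {a b : HahnSeries Γ R}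
    (ha : Even a.order ∧ 0 < a.leadingCoeff) (hb : Even b.order ∧ 0 < b.leadingCoeff) :
    Even (a + b).order ∧ 0 < (a + b).leadingCoeff := by
  wlog hab : a.order ≤ b.order generalizing a b
  · rw [add_comm]
    exact this hb ha (le_of_not_ge hab)
  have hb_coeff : 0 ≤ b.coeff a.order := by
    rcases hab.lt_or_eq with h | h
    · rw [coeff_eq_zero_of_lt_order h]
    · rw [h, ← leadingCoeff_eq]
      exact hb.2.le
  -- positive leading coefficients cannot cancel, so the order of `a + b` is that of `a`
  have hcoeff : 0 < (a + b).coeff a.order := by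
    rw [coeff_add, ← leadingCoeff_eq]
    exact add_pos_of_pos_of_nonneg ha.2 hb_coeff
  have hord : (a + b).order = a.order := by
    refine le_antisymm (order_le_of_coeff_ne_zero hcoeff.ne') ?_
    rw [le_order_iff_forall (ne_zero_of_coeff_ne_zero hcoeff.ne')]
    intro j hj
    rw [coeff_add, coeff_eq_zero_of_lt_order hj, coeff_eq_zero_of_lt_order (hj.trans_le hab),
      add_zero]
  exact ⟨hord ▸ ha.1, by rwa [leadingCoeff_eq, hord]⟩

variable [IsOrderedCancelAddMonoid Γ]

instance : CharZero (HahnSeries Γ R) := charZero_of_injective_ringHom C_injective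

instance : IsFormallyReal (HahnSeries Γ R) :=
  inferInstanceAs (IsFormallyReal (Lex (HahnSeries Γ R)))

theorem even_order_mul_self (x : HahnSeries Γ R) : Even (x * x).order := by
  rcases eq_or_ne x 0 with rfl | hx
  · simp
  · exact ⟨x.order, order_mul hx hx⟩

theorem leadingCoeff_mul_self_pos {x : HahnSeries Γ R} (hx : x ≠ 0) :
    0 < (x * x).leadingCoeff := by
  rw [leadingCoeff_mul]
  exact mul_self_pos.mpr (leadingCoeff_ne_zero.mpr hx)

theorem even_order_and_leadingCoeff_pos_of_isSumSq {s : HahnSeries Γ R} (hs : IsSumSq s)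
    (hs0 : s ≠ 0) : Even s.order ∧ 0 < s.leadingCoeff := by
  induction hs with
  | zero => exact absurd rfl hs0
  | @sq_add x s hs ih =>
    rcases eq_or_ne x 0 with rfl | hx
    · simpa using ih (by simpa using hs0)
    have hsq := And.intro (even_order_mul_self x) (leadingCoeff_mul_self_pos hx)
    rcases eq_or_ne s 0 with rfl | hs'
    · rwa [add_zero]
    · exact even_order_add_of_leadingCoeff_pos hsq (ih hs')

theorem not_isSumSq_of_not_even_order {c : HahnSeries Γ R} (hc : ¬Even c.order) :
    ¬IsSumSq c := fun hs => by
  rcases eq_or_ne c 0 with rfl | hc0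
  · exact hc (by simp)
  · exact hc (even_order_and_leadingCoeff_pos_of_isSumSq hs hc0).1

end HahnSeries

open Quaternion

namespace QuaternionAlgebra

section CommRing

variable {R : Type*} [CommRing R] {c₁ c₂ c₃ : R}

theorem isUnit_of_isUnit_re_mul_star {x : ℍ[R,c₁,c₂,c₃]} (h : IsUnit (x * star x).re) :
    IsUnit x := by
  have hnorm : IsUnit (x * star x) := by
    rw [mul_star_eq_coe, ← coe_algebraMap]
    exact h.map _
  exact (star_comm_self.symm.isUnit_mul_iff.mp hnorm).1

theorem re_mul_star (x : ℍ[R,c₁,0,c₃]) : (x * star x).re =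
    x.re * x.re - c₁ * x.imI * x.imI - c₃ * x.imJ * x.imJ + c₁ * c₃ * x.imK * x.imK := by
  simp only [re_mul, re_star, imI_star, imJ_star, imK_star, zero_mul, add_zero]
  ring

theorem mul_self_eq_coe [NoZeroDivisors R] [CharZero R] {q : ℍ[R,c₁,0,c₃]} {c : R}
    (h : q * q = c) :
    q.re * q.re = c ∨
      q.re = 0 ∧ c₁ * q.imI * q.imI + c₃ * q.imJ * q.imJ - c₁ * c₃ * q.imK * q.imK = c := by
  obtain ⟨hre, hi, hj, hk⟩ := QuaternionAlgebra.ext_iff.mp h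
  simp only [re_mul, imI_mul, imJ_mul, imK_mul, re_coe, imI_coe, imJ_coe, imK_coe, zero_mul,
    add_zero] at hre hi hj hk
  by_cases h0 : q.re = 0
  · exact .inr ⟨h0, by rw [h0] at hre; linear_combination hre⟩
  · have hvanish : ∀ y : R, q.re * y + y * q.re = 0 → y = 0 := fun y hy => by
      have : (2 * q.re) * y = 0 := by linear_combination hy
      exact (mul_eq_zero.mp this).resolve_left (mul_ne_zero two_ne_zero h0)
    have hi0 := hvanish q.imI (by linear_combination hi)
    have hj0 := hvanish q.imJ (by linear_combination hj)
    have hk0 := hvanish q.imK (by linear_combination hk)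
    exact .inl (by rw [hi0, hj0, hk0] at hre; linear_combination hre)

theorem isSumSq_or_isSumSq_neg_of_mul_self_eq_coe [NoZeroDivisors R] [CharZero R]
    {q : ℍ[R,-1,-1]} {c : R} (h : q * q = c) : IsSumSq c ∨ IsSumSq (-c) := by
  rcases mul_self_eq_coe h with h | ⟨-, h⟩
  · exact .inl (h ▸ .mul_self _)
  · have hc : -c = q.imI * q.imI + (q.imJ * q.imJ + (q.imK * q.imK + 0)) := by
      linear_combination h
    exact .inr (hc ▸ .sq_add _ (.sq_add _ (.sq_add _ .zero)))

theorem isEmpty_algEquiv_of_forall_mul_self_ne {A : Type*} [Ring A] [Algebra R A]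
    (h : ∀ x : A, x * x ≠ algebraMap R A c₃) : IsEmpty (A ≃ₐ[R] ℍ[R,c₁,c₂,c₃]) := by
  refine ⟨fun φ => h (φ.symm (Basis.self R).j) ?_⟩
  rw [← map_mul, (Basis.self R).j_mul_j, map_smul, map_one, Algebra.algebraMap_eq_smul_one]

end CommRing

section Field

variable {R : Type*} [Field R] [IsFormallyReal R] {b : R}

theorem isUnit_of_ne_zero_of_not_isSumSq (hb : ¬IsSumSq b) {x : ℍ[R,-1,b]} (hx : x ≠ 0) :
    IsUnit x := by
  refine isUnit_of_isUnit_re_mul_star (isUnit_iff_ne_zero.mpr fun h => hx ?_)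
  rw [re_mul_star] at h
  have hJK : x.imJ * x.imJ + x.imK * x.imK = 0 := by
    by_contra hJK
    exact hb (((IsSumSq.mul_self x.re).add (.mul_self x.imI)).of_eq_mul
      ((IsSumSq.mul_self x.imJ).add (.mul_self x.imK)) hJK (by linear_combination h))
  have hRI : x.re * x.re + x.imI * x.imI = 0 := by linear_combination h + b * hJK
  obtain ⟨hre, himI⟩ := IsFormallyReal.eq_zero_of_mul_self_add_mul_self_eq_zero hRI
  obtain ⟨himJ, himK⟩ := IsFormallyReal.eq_zero_of_mul_self_add_mul_self_eq_zero hJK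
  exact QuaternionAlgebra.ext hre himI himJ himK

theorem isSumSq_or_isSumSq_neg_of_mul_self_eq_neg [CharZero R] {q : ℍ[R,-1,b]}
    (h : q * q = ↑(-b)) : IsSumSq b ∨ IsSumSq (-b) := by
  rcases mul_self_eq_coe h with h | ⟨-, h⟩
  · exact .inr (h ▸ .mul_self _)
  · have hS : IsSumSq (q.imJ * q.imJ + q.imK * q.imK) := (IsSumSq.mul_self _).add (.mul_self _)
    have hS1 : q.imJ * q.imJ + q.imK * q.imK + 1 ≠ 0 := fun h1 =>
      one_ne_zero (IsFormallyReal.eq_zero_of_add_left hS .one h1)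
    exact .inl ((IsSumSq.mul_self q.imI).of_eq_mul (hS.add .one) hS1 (by linear_combination -h))

end Field

end QuaternionAlgebra

open Quaternion in
set_option maxSynthPendingDepth 2 in
set_option maxHeartbeats 1000000 in
/-- Over `𝕂 = ℝ((t))`, the quaternion algebras `H(-1,-1)`, `H(-1,t)` and
`H(-1,-t)` are division rings and are pairwise non-isomorphic as `𝕂`-algebras. -/
theorem quaternion_algebras_over_real_laurent_series
    (T : LaurentSeries ℝ) (hT : T = HahnSeries.single (1 : ℤ) (1 : ℝ)) :
    (∀ x : ℍ[LaurentSeries ℝ, -1, -1], x ≠ 0 → IsUnit x) ∧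
    (∀ x : ℍ[LaurentSeries ℝ, -1, T], x ≠ 0 → IsUnit x) ∧
    (∀ x : ℍ[LaurentSeries ℝ, -1, -T], x ≠ 0 → IsUnit x) ∧
    IsEmpty (ℍ[LaurentSeries ℝ, -1, -1] ≃ₐ[LaurentSeries ℝ] ℍ[LaurentSeries ℝ, -1, T]) ∧
    IsEmpty (ℍ[LaurentSeries ℝ, -1, -1] ≃ₐ[LaurentSeries ℝ] ℍ[LaurentSeries ℝ, -1, -T]) ∧
    IsEmpty (ℍ[LaurentSeries ℝ, -1, T] ≃ₐ[LaurentSeries ℝ] ℍ[LaurentSeries ℝ, -1, -T]) := by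
  have hT_order : T.order = 1 := hT ▸ HahnSeries.order_single one_ne_zero
  have hT_sq : ¬IsSumSq T := HahnSeries.not_isSumSq_of_not_even_order (by simp [hT_order])
  have hnegT_sq : ¬IsSumSq (-T) :=
    HahnSeries.not_isSumSq_of_not_even_order (by simp [HahnSeries.order_neg, hT_order])
  open QuaternionAlgebra in
  refine ⟨fun _ => isUnit_of_ne_zero_of_not_isSumSq IsFormallyReal.not_isSumSq_neg_one,
    fun _ => isUnit_of_ne_zero_of_not_isSumSq hT_sq,
    fun _ => isUnit_of_ne_zero_of_not_isSumSq hnegT_sq,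
    isEmpty_algEquiv_of_forall_mul_self_ne fun q h => ?_,
    isEmpty_algEquiv_of_forall_mul_self_ne fun q h => ?_,
    isEmpty_algEquiv_of_forall_mul_self_ne fun q h => ?_⟩
  all_goals rw [coe_algebraMap] at h
  · exact (isSumSq_or_isSumSq_neg_of_mul_self_eq_coe h).elim hT_sq hnegT_sq
  · exact (isSumSq_or_isSumSq_neg_of_mul_self_eq_coe h).elim hnegT_sq (by rwa [neg_neg])
  · exact (isSumSq_or_isSumSq_neg_of_mul_self_eq_neg h).elim hT_sq hnegT_sq
end

section
/- Let k be a field, K and L division rings which are finite-dimensional k-algebras with dim_k L = n · dim_k K for some n ≥ 1, and δ : L → Mₙ(K) a homomorphism of k-algebras. Then for every nonzero vector v ∈ Kⁿ: (i) the map ξ_v : L → Kⁿ, a ↦ δ(a)v, is bijective; (ii) there exists a unique homomorphism of k-algebras γ : K → L such that (δ(b)v)·a = δ(b·γ(a))v for all a ∈ K and b ∈ L, where (w·a)ᵢ = wᵢa denotes the componentwise right action of K on Kⁿ; moreover γ is injective. -/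
open Matrix

/-- Given a `k`-algebra homomorphism `δ : L → Mₙ(K)` between division rings with
`dim_k L = n · dim_k K` and a nonzero `v ∈ Kⁿ`: (i) `a ↦ δ(a)v` is bijective; (ii) there
is a unique `k`-algebra homomorphism `γ : K → L` with `(δ(b)v)·a = δ(b·γ(a))v` for all
`a ∈ K`, `b ∈ L`, and it is injective. -/
theorem exists_unique_gamma_of_matrix_embedding
    (k K L : Type*) [Field k]
    [DivisionRing K] [Algebra k K] [FiniteDimensional k K]
    [DivisionRing L] [Algebra k L] [FiniteDimensional k L]
    (n : ℕ) (hn : 1 ≤ n)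
    (hdim : Module.finrank k L = n * Module.finrank k K)
    (δ : L →ₐ[k] Matrix (Fin n) (Fin n) K)
    (v : Fin n → K) (hv : v ≠ 0) :
    Function.Bijective (fun a : L => (δ a) *ᵥ v) ∧
    (∃! γ : K →ₐ[k] L, ∀ (a : K) (b : L),
      (fun i => ((δ b) *ᵥ v) i * a) = (δ (b * γ a)) *ᵥ v) ∧
    (∀ γ : K →ₐ[k] L, (∀ (a : K) (b : L),
      (fun i => ((δ b) *ᵥ v) i * a) = (δ (b * γ a)) *ᵥ v) → Function.Injective γ) := by
  classical
  -- the componentwise right action commutes with mulVec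
  have hmul : ∀ (M : Matrix (Fin n) (Fin n) K) (w : Fin n → K) (a : K),
      (fun i => (M *ᵥ w) i * a) = M *ᵥ (fun i => w i * a) := by
    intro M w a
    funext i
    simp [Matrix.mulVec, dotProduct, Finset.sum_mul, mul_assoc]
  -- ξ as a linear map
  let ξ : L →ₗ[k] (Fin n → K) :=
    { toFun := fun a => δ a *ᵥ v
      map_add' := fun a b => by simp [Matrix.add_mulVec]
      map_smul' := fun c a => by simp [Matrix.smul_mulVec] }
  have hξinj : Function.Injective ξ := by
    rw [injective_iff_map_eq_zero]
    intro a ha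
    by_contra hne
    have h1 : δ a⁻¹ *ᵥ (δ a *ᵥ v) = 0 := by
      have : ξ a = 0 := ha
      simp only [ξ, LinearMap.coe_mk, AddHom.coe_mk] at this
      rw [this, Matrix.mulVec_zero]
    rw [Matrix.mulVec_mulVec, ← _root_.map_mul, inv_mul_cancel₀ hne, _root_.map_one,
      Matrix.one_mulVec] at h1
    exact hv h1
  have hdim' : Module.finrank k L = Module.finrank k (Fin n → K) := by
    rw [hdim, Module.finrank_pi_fintype k (M := fun _ : Fin n => K)]
    simp [Finset.sum_const, mul_comm]
  let e := ξ.linearEquivOfInjective hξinj hdim'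
  have he : ∀ a : L, e a = δ a *ᵥ v := fun a => rfl
  have hξbij : Function.Bijective (fun a : L => (δ a) *ᵥ v) := e.bijective
  -- define γ
  let γf : K → L := fun a => e.symm (fun i => v i * a)
  have hγf : ∀ a : K, δ (γf a) *ᵥ v = fun i => v i * a := by
    intro a
    have := e.apply_symm_apply (fun i => v i * a)
    exact this
  have γone : γf 1 = 1 := by
    apply hξinj
    show δ (γf 1) *ᵥ v = δ 1 *ᵥ v
    rw [hγf, _root_.map_one, Matrix.one_mulVec]
    funext i; simp
  have γmul : ∀ a b : K, γf (a * b) = γf a * γf b := by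
    intro a b
    apply hξinj
    show δ (γf (a * b)) *ᵥ v = δ (γf a * γf b) *ᵥ v
    rw [hγf, _root_.map_mul, ← Matrix.mulVec_mulVec, hγf b, ← hmul, hγf a]
    funext i; simp [mul_assoc]
  have γlin : ∀ (c : k) (a : K), γf (c • a) = c • γf a := by
    intro c a
    apply hξinj
    show δ (γf (c • a)) *ᵥ v = δ (c • γf a) *ᵥ v
    rw [hγf, _root_.map_smul, Matrix.smul_mulVec, hγf a]
    funext i
    rw [Pi.smul_apply, Algebra.smul_def, Algebra.smul_def, ← mul_assoc, ← mul_assoc,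
      ← Algebra.commutes c (v i)]
  have γadd : ∀ a b : K, γf (a + b) = γf a + γf b := by
    intro a b
    apply hξinj
    show δ (γf (a + b)) *ᵥ v = δ (γf a + γf b) *ᵥ v
    rw [hγf, map_add, Matrix.add_mulVec, hγf a, hγf b]
    funext i; simp [mul_add]
  have γzero : γf 0 = 0 := by
    apply hξinj
    show δ (γf 0) *ᵥ v = δ 0 *ᵥ v
    rw [hγf, map_zero, Matrix.zero_mulVec]
    funext i; simp
  let γ : K →ₐ[k] L :=
    { toFun := γf
      map_one' := γone
      map_mul' := γmul
      map_zero' := γzero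
      map_add' := γadd
      commutes' := by
        intro c
        have h0 : algebraMap k K c = c • (1 : K) := by simp [Algebra.smul_def]
        show γf (algebraMap k K c) = algebraMap k L c
        rw [h0, γlin, γone, Algebra.smul_def, mul_one] }
  have hγprop : ∀ (a : K) (b : L),
      (fun i => ((δ b) *ᵥ v) i * a) = (δ (b * γ a)) *ᵥ v := by
    intro a b
    rw [hmul, ← hγf a, Matrix.mulVec_mulVec, ← _root_.map_mul]
    rfl
  refine ⟨hξbij, ⟨γ, hγprop, ?_⟩, ?_⟩
  · intro γ' hγ'
    ext a
    apply hξinj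
    show δ (γ' a) *ᵥ v = δ (γ a) *ᵥ v
    have h1 := hγ' a 1
    rw [one_mul, _root_.map_one, Matrix.one_mulVec] at h1
    rw [← h1]
    exact (hγf a).symm
  · intro γ' _
    exact γ'.toRingHom.injective
end

section
/- Let k be a field, K and L division rings which are finite-dimensional k-algebras with dim_k L = n · dim_k K for some n ≥ 1. Let δ, δ̃ : L → Mₙ(K) be homomorphisms of k-algebras, v, ṽ ∈ Kⁿ nonzero vectors, and γ, γ̃ : K → L homomorphisms of k-algebras satisfying (δ(b)v)·a = δ(b·γ(a))v and (δ̃(b)ṽ)·a = δ̃(b·γ̃(a))ṽ for all a ∈ K, b ∈ L. If δ and δ̃ are similar (in particular if δ = δ̃, with v, ṽ arbitrary nonzero vectors), then γ and γ̃ are similar, i.e. there exists a unit c ∈ L with γ̃(a) = c γ(a) c⁻¹ for all a ∈ K. -/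
open Matrix

private lemma mulVec_right_mul_aux {K : Type*} [DivisionRing K] {n : ℕ}
    (M : Matrix (Fin n) (Fin n) K) (w : Fin n → K) (a : K) :
    M *ᵥ (fun j => w j * a) = fun i => (M *ᵥ w) i * a := by
  funext i
  simp [Matrix.mulVec, dotProduct, Finset.sum_mul, mul_assoc]

/-- If `δ, δ̃ : L → Mₙ(K)` are similar `k`-algebra homomorphisms, and
`γ, γ̃ : K → L` are associated to them via nonzero vectors `v, ṽ` by the identities
`(δ(b)v)·a = δ(b·γ(a))v`, then `γ` and `γ̃` are similar. -/
theorem gamma_similar_of_delta_similar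
    (k K L : Type*) [Field k]
    [DivisionRing K] [Algebra k K] [FiniteDimensional k K]
    [DivisionRing L] [Algebra k L] [FiniteDimensional k L]
    (n : ℕ) (hn : 1 ≤ n)
    (hdim : Module.finrank k L = n * Module.finrank k K)
    (δ δ' : L →ₐ[k] Matrix (Fin n) (Fin n) K)
    (v v' : Fin n → K) (hv : v ≠ 0) (hv' : v' ≠ 0)
    (γ γ' : K →ₐ[k] L)
    (hγ : ∀ (a : K) (b : L), (fun i => ((δ b) *ᵥ v) i * a) = (δ (b * γ a)) *ᵥ v)
    (hγ' : ∀ (a : K) (b : L), (fun i => ((δ' b) *ᵥ v') i * a) = (δ' (b * γ' a)) *ᵥ v')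
    (hsim : ∃ d : (Matrix (Fin n) (Fin n) K)ˣ, ∀ b : L, δ' b = d.val * δ b * (d⁻¹).val) :
    ∃ c : Lˣ, ∀ a : K, γ' a = c.val * γ a * (c⁻¹).val := by
  obtain ⟨d, hd⟩ := hsim
  -- the `k`-linear map `b ↦ δ(b) v`
  set φ : L →ₗ[k] (Fin n → K) :=
    { toFun := fun b => δ b *ᵥ v
      map_add' := by intro x y; simp [map_add, Matrix.add_mulVec]
      map_smul' := by intro r x; simp [_root_.map_smul, Matrix.smul_mulVec] } with hφ
  have key : ∀ b : L, δ b *ᵥ v = 0 → b = 0 := by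
    intro b hb
    by_contra hb0
    apply hv
    have h1 : v = δ (b⁻¹ * b) *ᵥ v := by
      rw [inv_mul_cancel₀ hb0, _root_.map_one, Matrix.one_mulVec]
    rwa [_root_.map_mul, ← Matrix.mulVec_mulVec, hb, Matrix.mulVec_zero] at h1
  have hinj : Function.Injective φ := by
    intro x y h
    have : δ (x - y) *ᵥ v = 0 := by
      rw [map_sub, Matrix.sub_mulVec]
      have hx : δ x *ᵥ v = δ y *ᵥ v := h
      rw [hx, sub_self]
    have := key _ this
    exact sub_eq_zero.mp this
  have hsurj : Function.Surjective φ := by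
    have hrank : Module.finrank k L = Module.finrank k (Fin n → K) := by
      simp [Module.finrank_pi_fintype, hdim]
    exact (LinearMap.injective_iff_surjective_of_finrank_eq_finrank hrank).mp hinj
  obtain ⟨c, hc⟩ := hsurj ((d⁻¹).val *ᵥ v')
  have hcv : δ c *ᵥ v = (d⁻¹).val *ᵥ v' := hc
  have hc0 : c ≠ 0 := by
    intro h
    apply hv'
    have h1 : (d⁻¹).val *ᵥ v' = 0 := by
      rw [← hcv, h, map_zero, Matrix.zero_mulVec]
    have h2 : v' = (d.val * (d⁻¹).val) *ᵥ v' := by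
      rw [Units.mul_inv, Matrix.one_mulVec]
    rwa [← Matrix.mulVec_mulVec, h1, Matrix.mulVec_zero] at h2
  refine ⟨Units.mk0 c hc0, fun a => ?_⟩
  rw [Units.val_inv_eq_inv_val, Units.val_mk0, eq_mul_inv_iff_mul_eq₀ hc0]
  -- show `γ'(a) * c = c * γ(a)` by applying the injective map `φ`
  have heq : δ (γ' a * c) *ᵥ v = δ (c * γ a) *ᵥ v := by
    have hδγ' : δ (γ' a) = (d⁻¹).val * δ' (γ' a) * d.val := by
      rw [hd (γ' a), mul_assoc (d⁻¹).val, mul_assoc (d.val * δ (γ' a)),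
        Units.inv_mul, mul_one, Units.inv_mul_cancel_left]
    have hδ'1 : δ' (γ' a) *ᵥ v' = fun i => v' i * a := by
      have := hγ' a 1
      simpa [_root_.map_one, Matrix.one_mulVec] using this.symm
    calc δ (γ' a * c) *ᵥ v
        = δ (γ' a) *ᵥ (δ c *ᵥ v) := by rw [_root_.map_mul, Matrix.mulVec_mulVec]
      _ = (δ (γ' a) * (d⁻¹).val) *ᵥ v' := by rw [hcv, Matrix.mulVec_mulVec]
      _ = ((d⁻¹).val * δ' (γ' a)) *ᵥ v' := by
            rw [hδγ', mul_assoc, mul_assoc, Units.mul_inv, mul_one]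
      _ = (d⁻¹).val *ᵥ (δ' (γ' a) *ᵥ v') := by rw [Matrix.mulVec_mulVec]
      _ = (d⁻¹).val *ᵥ (fun i => v' i * a) := by rw [hδ'1]
      _ = fun i => ((d⁻¹).val *ᵥ v') i * a := mulVec_right_mul_aux _ _ _
      _ = fun i => (δ c *ᵥ v) i * a := by rw [hcv]
      _ = δ (c * γ a) *ᵥ v := hγ a c
  have := key (γ' a * c - c * γ a)
    (by rw [map_sub, Matrix.sub_mulVec, heq, sub_self])
  exact sub_eq_zero.mp this
end

section
/- Let k be a field, K and L division rings which are finite-dimensional k-algebras with dim_k L = n · dim_k K for some n ≥ 1, δ : L → Mₙ(K) a homomorphism of k-algebras, v ∈ Kⁿ a nonzero vector, and γ : K → L the homomorphism of k-algebras satisfying (δ(b)v)·a = δ(b·γ(a))v for all a ∈ K, b ∈ L. Then: (a) if γ(Z(K)) ⊆ Z(L), then for every a ∈ Z(K) the matrix δ(γ(a)) is the scalar matrix a·Iₙ; (b) if Z(L) ⊆ γ(Z(K)), then for every a ∈ K with γ(a) ∈ Z(L), the matrix δ(γ(a)) is the scalar matrix a·Iₙ. -/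
open Matrix

/-- Let `γ : K → L` be associated to `δ : L → Mₙ(K)` and a nonzero vector `v`
via `(δ(b)v)·a = δ(b·γ(a))v`. (a) If `γ(Z(K)) ⊆ Z(L)`, then `δ(γ(a)) = a·Iₙ` for all
`a ∈ Z(K)`. (b) If `Z(L) ⊆ γ(Z(K))`, then `δ(γ(a)) = a·Iₙ` for every `a ∈ K` with
`γ(a) ∈ Z(L)`. -/
theorem delta_gamma_central_scalar
    (k K L : Type*) [Field k]
    [DivisionRing K] [Algebra k K] [FiniteDimensional k K]
    [DivisionRing L] [Algebra k L] [FiniteDimensional k L]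
    (n : ℕ) (hn : 1 ≤ n)
    (hdim : Module.finrank k L = n * Module.finrank k K)
    (δ : L →ₐ[k] Matrix (Fin n) (Fin n) K)
    (v : Fin n → K) (hv : v ≠ 0)
    (γ : K →ₐ[k] L)
    (hγ : ∀ (a : K) (b : L), (fun i => ((δ b) *ᵥ v) i * a) = (δ (b * γ a)) *ᵥ v) :
    ((∀ a ∈ Subring.center K, γ a ∈ Subring.center L) →
      ∀ a ∈ Subring.center K, δ (γ a) = a • (1 : Matrix (Fin n) (Fin n) K)) ∧
    (((Subring.center L : Set L) ⊆ ⇑γ '' (Subring.center K : Set K)) →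
      ∀ a : K, γ a ∈ Subring.center L → δ (γ a) = a • (1 : Matrix (Fin n) (Fin n) K)) := by
  -- the k-linear map b ↦ δ(b) *ᵥ v
  let f : L →ₗ[k] (Fin n → K) :=
    { toFun := fun b => δ b *ᵥ v
      map_add' := by intro b c; simp [Matrix.add_mulVec]
      map_smul' := by intro c b; simp [Matrix.smul_mulVec] }
  have hfinj : Function.Injective f := by
    intro b c h
    by_contra hne
    have hbc : b - c ≠ 0 := sub_ne_zero.mpr fun h' => hne (by rw [h'])
    have h0 : δ (b - c) *ᵥ v = 0 := by
      have : f (b - c) = f b - f c := map_sub f b c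
      simp only [f, LinearMap.coe_mk, AddHom.coe_mk] at this h ⊢
      rw [this]
      simp [f, h]
    have h1 : δ (b - c)⁻¹ *ᵥ (δ (b - c) *ᵥ v) = 0 := by rw [h0]; simp
    rw [Matrix.mulVec_mulVec, ← _root_.map_mul, inv_mul_cancel₀ hbc, _root_.map_one,
      Matrix.one_mulVec] at h1
    exact hv h1
  have hfr : Module.finrank k L = Module.finrank k (Fin n → K) := by
    rw [hdim]; simp [Module.finrank_pi_fintype]
  have hfsurj : Function.Surjective f :=
    (LinearMap.linearEquivOfInjective f hfinj hfr).surjective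
  -- core claim
  have key : ∀ a : K, a ∈ Subring.center K → γ a ∈ Subring.center L →
      δ (γ a) = a • (1 : Matrix (Fin n) (Fin n) K) := by
    intro a haK haL
    rw [Subring.mem_center_iff] at haK haL
    set M : Matrix (Fin n) (Fin n) K := δ (γ a) - a • 1 with hM
    have hMv : ∀ w : Fin n → K, M *ᵥ w = 0 := by
      intro w
      obtain ⟨b, rfl⟩ := hfsurj w
      show M *ᵥ (δ b *ᵥ v) = 0
      rw [Matrix.mulVec_mulVec, hM, Matrix.sub_mul, Matrix.sub_mulVec, smul_one_mul,
        ← _root_.map_mul, ← haL b, ← hγ a b, Matrix.smul_mulVec]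
      funext i
      simp [haK]
    have hM0 : M = 0 := by
      ext i j
      have := congrFun (hMv (Pi.single j 1)) i
      rw [Matrix.mulVec_single] at this
      simpa using this
    rw [hM] at hM0
    exact sub_eq_zero.mp hM0
  constructor
  · intro h a ha
    exact key a ha (h a ha)
  · intro h a haL
    obtain ⟨c, hc, hca⟩ := h haL
    have : c = a := γ.toRingHom.injective hca
    exact key a (this ▸ hc) haL
end

section
/- Let k be a field and K, L division rings which are finite-dimensional k-algebras with dim_k L = 2 · dim_k K. Let γ : K → L be any injective homomorphism of k-algebras. Then either Z(L) ⊆ γ(Z(K)) or γ(Z(K)) ⊆ Z(L), where Z(K) and Z(L) denote the centers of K and L. -/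
/-- If `K, L` are division rings, finite-dimensional over a field `k`, with
`dim_k L = 2 · dim_k K`, and `γ : K → L` is an injective `k`-algebra homomorphism, then
either `Z(L) ⊆ γ(Z(K))` or `γ(Z(K)) ⊆ Z(L)`. -/
theorem center_comparable_of_degree_two_embedding
    (k K L : Type*) [Field k]
    [DivisionRing K] [Algebra k K] [FiniteDimensional k K]
    [DivisionRing L] [Algebra k L] [FiniteDimensional k L]
    (hdim : Module.finrank k L = 2 * Module.finrank k K)
    (γ : K →ₐ[k] L) (hγ : Function.Injective γ) :
    ((Subring.center L : Set L) ⊆ ⇑γ '' (Subring.center K : Set K)) ∨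
      (⇑γ '' (Subring.center K : Set K) ⊆ (Subring.center L : Set L)) := by
  by_cases h : (Subring.center L : Set L) ⊆ Set.range γ
  · left
    rintro w hw
    obtain ⟨x, rfl⟩ := h hw
    refine ⟨x, ?_, rfl⟩
    rw [SetLike.mem_coe, Subring.mem_center_iff] at hw ⊢
    intro y
    apply hγ
    simp only [map_mul]
    exact hw (γ y)
  · rw [Set.not_subset] at h
    obtain ⟨z, hz, hznot⟩ := h
    right
    set φ : (K × K) →ₗ[k] L :=
      LinearMap.coprod γ.toLinearMap ((LinearMap.mulRight k z).comp γ.toLinearMap) with hφ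
    have hφapp : ∀ p : K × K, φ p = γ p.1 + γ p.2 * z := by
      intro p
      simp [hφ, LinearMap.coprod_apply]
    have hφinj : Function.Injective φ := by
      rw [injective_iff_map_eq_zero]
      rintro ⟨a, b⟩ hab
      rw [hφapp] at hab
      by_cases hb : b = 0
      · subst hb
        simp only [map_zero, zero_mul, add_zero] at hab
        have ha : a = 0 := hγ (by simpa using hab)
        simp [ha]
      · exfalso
        apply hznot
        refine ⟨b⁻¹ * (-a), ?_⟩
        have hbz : γ b * z = -γ a := eq_neg_of_add_eq_zero_right hab
        have hb' : γ b ≠ 0 := fun h0 => hb (hγ (by simpa using h0))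
        rw [map_mul, map_inv₀, map_neg, ← hbz, inv_mul_cancel_left₀ hb']
    have hφsurj : Function.Surjective φ := by
      rw [← LinearMap.range_eq_top]
      apply Submodule.eq_top_of_finrank_eq
      rw [LinearMap.finrank_range_of_inj hφinj, Module.finrank_prod, hdim, two_mul]
    rintro w ⟨x, hx, rfl⟩
    rw [SetLike.mem_coe, Subring.mem_center_iff]
    intro l
    obtain ⟨⟨a, b⟩, rfl⟩ := hφsurj l
    rw [SetLike.mem_coe, Subring.mem_center_iff] at hx
    have hzc := Subring.mem_center_iff.mp hz
    rw [hφapp]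
    simp only []
    calc (γ a + γ b * z) * γ x = γ (a * x) + γ (b * x) * z := by
          rw [map_mul, map_mul, add_mul, mul_assoc, ← hzc (γ x), ← mul_assoc]
      _ = γ (x * a) + γ (x * b) * z := by rw [hx a, hx b]
      _ = γ x * (γ a + γ b * z) := by
          rw [map_mul, map_mul, mul_add, mul_assoc]
end

section
/- Let k be a field and K, L division rings which are finite-dimensional k-algebras with dim_k L = 2 · dim_k K. Let γ : K → L be an injective homomorphism of k-algebras and suppose c ∈ Z(L) with c ∉ γ(Z(K)). Then c ∉ γ(K), every element of L can be written uniquely as γ(x) + γ(y)c with x, y ∈ K, and Z(L) = γ(Z(K)) ∔ γ(Z(K))c, i.e. an element γ(x) + γ(y)c (x, y ∈ K) lies in Z(L) if and only if x, y ∈ Z(K). -/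
/-!
If `c = γ a` were central, injectivity of `γ` would make `a` central; so `c ∉ γ(K)`, which
makes the `k`-linear map `(x, y) ↦ γ x + γ y * c` injective, and the dimension count makes it
bijective. Multiplying `γ x + γ y * c` by `γ a` on the left, resp. on the right (where `c`
being central lets `γ a` pass it), multiplies both coordinates by `a` on that side; by
uniqueness of coordinates the element commutes with `γ(K)` iff `x, y ∈ Z(K)`. Conversely
`γ(Z(K))` commutes with `γ(K)` and with `c`, which together span `L`.
-/

open Function Subring

theorem mem_center_of_injective_of_map_mem_center {K L F : Type*} [Ring K] [Ring L]
    [FunLike F K L] [MulHomClass F K L] {f : F} (hf : Injective f) {a : K}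
    (ha : f a ∈ center L) : a ∈ center K :=
  mem_center_iff.2 fun g => hf <| by rw [map_mul, map_mul, mem_center_iff.1 ha]

namespace AlgHom

section Ring

variable {k K L : Type*} [CommRing k] [Ring K] [Algebra k K] [Ring L] [Algebra k L]
  (γ : K →ₐ[k] L) (c : L)

def coprodMulRight : K × K →ₗ[k] L :=
  γ.toLinearMap.coprod (LinearMap.mulRight k c ∘ₗ γ.toLinearMap)

@[simp]
theorem coprodMulRight_apply (p : K × K) : γ.coprodMulRight c p = γ p.1 + γ p.2 * c := rfl

theorem map_mul_coprodMulRight (a x y : K) :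
    γ a * γ.coprodMulRight c (x, y) = γ.coprodMulRight c (a * x, a * y) := by
  simp only [coprodMulRight_apply, map_mul, mul_add, mul_assoc]

variable {c}

theorem coprodMulRight_mul_map (hc : c ∈ center L) (x y a : K) :
    γ.coprodMulRight c (x, y) * γ a = γ.coprodMulRight c (x * a, y * a) := by
  simp only [coprodMulRight_apply, map_mul, add_mul, mul_assoc, mem_center_iff.1 hc]

theorem map_mem_center (hc : c ∈ center L) (hΦ : Surjective (γ.coprodMulRight c)) {z : K}
    (hz : z ∈ center K) : γ z ∈ center L := by
  refine mem_center_iff.2 fun d => ?_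
  obtain ⟨⟨x, y⟩, rfl⟩ := hΦ d
  rw [coprodMulRight_mul_map γ hc, map_mul_coprodMulRight, mem_center_iff.1 hz x,
    mem_center_iff.1 hz y]

theorem add_mul_mem_center_iff (hc : c ∈ center L) (hΦ : Bijective (γ.coprodMulRight c))
    (x y : K) : γ x + γ y * c ∈ center L ↔ x ∈ center K ∧ y ∈ center K := by
  constructor
  · intro h
    have hcomm (a : K) : (a * x, a * y) = (x * a, y * a) := hΦ.1 <| by
      rw [← map_mul_coprodMulRight, ← coprodMulRight_mul_map γ hc, coprodMulRight_apply,
        mem_center_iff.1 h]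
    exact ⟨mem_center_iff.2 fun a => congrArg Prod.fst (hcomm a),
      mem_center_iff.2 fun a => congrArg Prod.snd (hcomm a)⟩
  · rintro ⟨hx, hy⟩
    exact add_mem (γ.map_mem_center hc hΦ.2 hx) (mul_mem (γ.map_mem_center hc hΦ.2 hy) hc)

end Ring

section DivisionRing

variable {k K L : Type*} [Field k] [DivisionRing K] [Algebra k K] [Ring L] [Nontrivial L]
  [Algebra k L] (γ : K →ₐ[k] L) {c : L}

theorem injective_coprodMulRight (hc : c ∉ Set.range γ) : Injective (γ.coprodMulRight c) := by
  refine (injective_iff_map_eq_zero _).2 ?_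
  rintro ⟨s, t⟩ (h : γ s + γ t * c = 0)
  obtain rfl : t = 0 := by
    by_contra ht
    refine hc ⟨t⁻¹ * -s, ?_⟩
    rw [map_mul, map_neg, ← eq_neg_of_add_eq_zero_right h, ← mul_assoc, ← map_mul,
      inv_mul_cancel₀ ht, map_one, one_mul]
  rw [map_zero, zero_mul, add_zero, ← map_zero γ] at h
  rw [(γ : K →+* L).injective h, Prod.mk_zero_zero]

theorem bijective_coprodMulRight [FiniteDimensional k K] [FiniteDimensional k L]
    (hdim : Module.finrank k L = 2 * Module.finrank k K) (hc : c ∉ Set.range γ) :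
    Bijective (γ.coprodMulRight c) := by
  have hinj := γ.injective_coprodMulRight hc
  refine ⟨hinj, (LinearMap.injective_iff_surjective_of_finrank_eq_finrank ?_).1 hinj⟩
  rw [Module.finrank_prod, hdim, two_mul]

end DivisionRing

end AlgHom

theorem center_decomposition_of_degree_two_embedding_general
    (k K L : Type*) [Field k]
    [DivisionRing K] [Algebra k K] [FiniteDimensional k K]
    [DivisionRing L] [Algebra k L] [FiniteDimensional k L]
    (hdim : Module.finrank k L = 2 * Module.finrank k K)
    (γ : K →ₐ[k] L)
    (c : L) (hc : c ∈ Subring.center L) (hc' : c ∉ ⇑γ '' (Subring.center K : Set K)) :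
    c ∉ Set.range ⇑γ ∧
    (∀ d : L, ∃! p : K × K, d = γ p.1 + γ p.2 * c) ∧
    (∀ x y : K, γ x + γ y * c ∈ Subring.center L ↔
      x ∈ Subring.center K ∧ y ∈ Subring.center K) := by
  have hrange : c ∉ Set.range γ := by
    rintro ⟨a, rfl⟩
    exact hc' ⟨a, mem_center_of_injective_of_map_mem_center (γ : K →+* L).injective hc, rfl⟩
  have hΦ := γ.bijective_coprodMulRight hdim hrange
  refine ⟨hrange, fun d => ?_, γ.add_mul_mem_center_iff hc hΦ⟩
  obtain ⟨p, hp, huniq⟩ := hΦ.existsUnique d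
  exact ⟨p, hp.symm, fun q hq => huniq q hq.symm⟩

/-- If `K, L` are division rings, finite-dimensional over a field `k`, with
`dim_k L = 2 · dim_k K`, `γ : K → L` is an injective `k`-algebra homomorphism, and
`c ∈ Z(L)` with `c ∉ γ(Z(K))`, then `c ∉ γ(K)`, every element of `L` is uniquely of the
form `γ(x) + γ(y)·c`, and `γ(x) + γ(y)·c ∈ Z(L)` iff `x, y ∈ Z(K)`. -/
theorem center_decomposition_of_degree_two_embedding
    (k K L : Type*) [Field k]
    [DivisionRing K] [Algebra k K] [FiniteDimensional k K]
    [DivisionRing L] [Algebra k L] [FiniteDimensional k L]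
    (hdim : Module.finrank k L = 2 * Module.finrank k K)
    (γ : K →ₐ[k] L) (hγ : Function.Injective γ)
    (c : L) (hc : c ∈ Subring.center L) (hc' : c ∉ ⇑γ '' (Subring.center K : Set K)) :
    c ∉ Set.range ⇑γ ∧
    (∀ d : L, ∃! p : K × K, d = γ p.1 + γ p.2 * c) ∧
    (∀ x y : K, γ x + γ y * c ∈ Subring.center L ↔
      x ∈ Subring.center K ∧ y ∈ Subring.center K) :=
  center_decomposition_of_degree_two_embedding_general k K L hdim γ c hc hc'
end

section
/- Let k be a field and K, L division rings which are finite-dimensional k-algebras, and let ι : K → L be a homomorphism of k-algebras. Then there exist n ≥ 1 with dim_k L = n · dim_k K, a homomorphism of k-algebras δ : L → Mₙ(K), and a nonzero vector v ∈ Kⁿ such that (δ(b)v)·a = δ(b·ι(a))v for all a ∈ K and b ∈ L, where (w·a)ᵢ = wᵢa denotes the componentwise right action of K on Kⁿ. -/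
/-!
Through `ι`, `L` is a right `K`-vector space, of some dimension `n` with `dim_k L = n · dim_k K`,
and left multiplication by `b ∈ L` is right `K`-linear. Taking `δ b` to be the matrix of this left
multiplication in a right `K`-basis of `L`, and `v` the coordinate vector of `1`, the vector
`δ b · v` is the coordinate vector of `b`, and right multiplication by `a ∈ K` on coordinates is
right multiplication by `ι a` on `L`.
-/

open Matrix MulOpposite

section EndVec

variable (k : Type*) {R : Type*} [CommSemiring k] [Semiring R] [Algebra k R]
  (ι : Type*) [Fintype ι] [DecidableEq ι]

noncomputable def endVecMulOppositeAlgEquivMatrix :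
    Module.End Rᵐᵒᵖ (ι → R) ≃ₐ[k] Matrix ι ι R :=
  (endVecAlgEquivMatrixEnd ι k Rᵐᵒᵖ R).trans
    (AlgEquiv.mapMatrix (AlgEquiv.moduleEndSelfOp k).symm)

variable {k ι}

@[simp]
theorem endVecMulOppositeAlgEquivMatrix_apply (f : Module.End Rᵐᵒᵖ (ι → R)) (i j : ι) :
    endVecMulOppositeAlgEquivMatrix k ι f i j = f (Pi.single j 1) i :=
  rfl

theorem endVecMulOppositeAlgEquivMatrix_mulVec (f : Module.End Rᵐᵒᵖ (ι → R)) (v : ι → R) :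
    endVecMulOppositeAlgEquivMatrix k ι f *ᵥ v = f v := by
  have hv : v = ∑ j, op (v j) • Pi.single j 1 := by
    ext i
    simp [Pi.single_apply]
  conv_rhs => rw [hv]
  ext i
  simp [mulVec, dotProduct]

end EndVec

noncomputable def Module.Basis.equivFunUnop {R M ι : Type*} [Semiring R] [AddCommMonoid M]
    [Module Rᵐᵒᵖ M] [Fintype ι] (B : Module.Basis ι Rᵐᵒᵖ M) : M ≃ₗ[Rᵐᵒᵖ] (ι → R) :=
  B.equivFun.trans (LinearEquiv.piCongrRight fun _ => (opLinearEquiv Rᵐᵒᵖ).symm)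

section LeftMulMatrix

variable (k : Type*) {R A ι : Type*} [CommSemiring k] [Semiring R] [Algebra k R]
  [Semiring A] [Algebra k A] [Module Rᵐᵒᵖ A] [IsScalarTower k Rᵐᵒᵖ A] [SMulCommClass Rᵐᵒᵖ k A]
  [SMulCommClass A Rᵐᵒᵖ A] [Fintype ι] [DecidableEq ι]

noncomputable def Module.Basis.leftMulMatrix (B : Module.Basis ι Rᵐᵒᵖ A) :
    A →ₐ[k] Matrix ι ι R :=
  ((endVecMulOppositeAlgEquivMatrix k ι).toAlgHom.comp
    (B.equivFunUnop.conjAlgEquiv k).toAlgHom).comp (Algebra.lsmul k Rᵐᵒᵖ A)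

variable {k}

theorem Module.Basis.leftMulMatrix_mulVec (B : Module.Basis ι Rᵐᵒᵖ A) (b x : A) :
    B.leftMulMatrix k b *ᵥ B.equivFunUnop x = B.equivFunUnop (b * x) := by
  simp [leftMulMatrix, endVecMulOppositeAlgEquivMatrix_mulVec]

end LeftMulMatrix

theorem exists_regular_embedding_of_algHom_general
    (k K L : Type*) [Field k]
    [DivisionRing K] [Algebra k K]
    [DivisionRing L] [Algebra k L] [FiniteDimensional k L]
    (ι : K →ₐ[k] L) :
    ∃ n : ℕ, 1 ≤ n ∧ Module.finrank k L = n * Module.finrank k K ∧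
      ∃ (δ : L →ₐ[k] Matrix (Fin n) (Fin n) K) (v : Fin n → K),
        v ≠ 0 ∧ ∀ (a : K) (b : L),
          (fun i => ((δ b) *ᵥ v) i * a) = (δ (b * ι a)) *ᵥ v := by
  let : Module Kᵐᵒᵖ L := Module.compHom L ι.toRingHom.op
  have hsmul (a : K) (x : L) : op a • x = x * ι a := rfl
  have : IsScalarTower k Kᵐᵒᵖ L := ⟨fun c a x => by
    induction a using MulOpposite.rec' with
    | h a => rw [← op_smul, hsmul, hsmul, map_smul, mul_smul_comm]⟩
  have : SMulCommClass Kᵐᵒᵖ k L := ⟨fun a c x => by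
    induction a using MulOpposite.rec' with
    | h a => simp only [hsmul, smul_mul_assoc]⟩
  have : SMulCommClass L Kᵐᵒᵖ L := ⟨fun b a x => by
    induction a using MulOpposite.rec' with
    | h a => simp only [hsmul, smul_eq_mul, mul_assoc]⟩
  have : FiniteDimensional Kᵐᵒᵖ L := Module.Finite.of_restrictScalars_finite k Kᵐᵒᵖ L
  have hdim : Module.finrank k L = Module.finrank Kᵐᵒᵖ L * Module.finrank k K := by
    rw [← Module.finrank_mul_finrank k Kᵐᵒᵖ L, mul_comm, (opLinearEquiv k).symm.finrank_eq]
  let B := Module.finBasis Kᵐᵒᵖ L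
  refine ⟨_, Module.finrank_pos, hdim, B.leftMulMatrix k, B.equivFunUnop 1, by simp,
    fun a b => ?_⟩
  rw [B.leftMulMatrix_mulVec, mul_one, B.leftMulMatrix_mulVec, mul_one, ← hsmul, map_smul]
  rfl

/-- Every `k`-algebra homomorphism `ι : K → L` between division rings that are
finite-dimensional over `k` arises from a `k`-algebra homomorphism `δ : L → Mₙ(K)`
(a regular embedding) and a nonzero vector `v ∈ Kⁿ` via `(δ(b)v)·a = δ(b·ι(a))v`, where
`n = dim_k L / dim_k K`. -/
theorem exists_regular_embedding_of_algHom
    (k K L : Type*) [Field k]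
    [DivisionRing K] [Algebra k K] [FiniteDimensional k K]
    [DivisionRing L] [Algebra k L] [FiniteDimensional k L]
    (ι : K →ₐ[k] L) :
    ∃ n : ℕ, 1 ≤ n ∧ Module.finrank k L = n * Module.finrank k K ∧
      ∃ (δ : L →ₐ[k] Matrix (Fin n) (Fin n) K) (v : Fin n → K),
        v ≠ 0 ∧ ∀ (a : K) (b : L),
          (fun i => ((δ b) *ᵥ v) i * a) = (δ (b * ι a)) *ᵥ v :=
  exists_regular_embedding_of_algHom_general k K L ι
end

section
/- Let k be a field and K, L division rings which are finite-dimensional k-algebras with dim_k L = 2 · dim_k K. Let δ, δ̃ : L → M₂(K) be homomorphisms of k-algebras, v, ṽ ∈ K² nonzero vectors, and γ, γ̃ : K → L homomorphisms of k-algebras satisfying (δ(b)v)·a = δ(b·γ(a))v and (δ̃(b)ṽ)·a = δ̃(b·γ̃(a))ṽ for all a ∈ K, b ∈ L. If γ and γ̃ are similar (there is a unit c ∈ L with γ̃ = Ad_c ∘ γ), then δ and δ̃ are similar, i.e. there is an invertible matrix X ∈ GL₂(K) with δ̃(b) = X δ(b) X⁻¹ for all b ∈ L. Consequently, the assignment δ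 ↦ γ induces a bijection between similarity classes of k-algebra homomorphisms L → M₂(K) and similarity classes of k-algebra homomorphisms K → L. -/
open Matrix

set_option linter.unusedSectionVars false

section S15aux
variable {k K L : Type*} [Field k]
  [DivisionRing K] [Algebra k K] [FiniteDimensional k K]
  [DivisionRing L] [Algebra k L] [FiniteDimensional k L]

/-- relation: γ is associated to (δ, v) -/
def S15Rel (δ : L →ₐ[k] Matrix (Fin 2) (Fin 2) K) (v : Fin 2 → K) (γ : K →ₐ[k] L) : Prop :=
  ∀ (a : K) (b : L), (fun i => ((δ b) *ᵥ v) i * a) = (δ (b * γ a)) *ᵥ v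

lemma S15.mulVec_ext {A B : Matrix (Fin 2) (Fin 2) K}
    (h : ∀ x, A *ᵥ x = B *ᵥ x) : A = B := by
  ext i j
  have := congrFun (h (Pi.single j 1)) i
  simpa [Matrix.mulVec_single] using this

lemma S15.mulVec_right (A : Matrix (Fin 2) (Fin 2) K) (w : Fin 2 → K) (a : K) :
    A *ᵥ (fun i => w i * a) = fun i => (A *ᵥ w) i * a := by
  funext i
  simp [Matrix.mulVec, dotProduct, add_mul, mul_assoc]

lemma S15.finrank_pi2 : Module.finrank k (Fin 2 → K) = 2 * Module.finrank k K := by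
  rw [Module.finrank_pi_fintype, Fin.sum_univ_two, two_mul]

/-- the k-linear map b ↦ δ(b) v -/
noncomputable def S15f (δ : L →ₐ[k] Matrix (Fin 2) (Fin 2) K) (v : Fin 2 → K) :
    L →ₗ[k] (Fin 2 → K) where
  toFun b := δ b *ᵥ v
  map_add' b b' := by simp [map_add, Matrix.add_mulVec]
  map_smul' s b := by simp [_root_.map_smul, Matrix.smul_mulVec]

lemma S15f_inj (δ : L →ₐ[k] Matrix (Fin 2) (Fin 2) K) {v : Fin 2 → K} (hv : v ≠ 0) :
    Function.Injective (S15f δ v) := by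
  have h0 : ∀ b, S15f δ v b = 0 → b = 0 := by
    intro b hb
    by_contra hbne
    apply hv
    have : δ b⁻¹ *ᵥ (δ b *ᵥ v) = v := by
      rw [Matrix.mulVec_mulVec, ← _root_.map_mul, inv_mul_cancel₀ hbne, _root_.map_one, Matrix.one_mulVec]
    rw [show δ b *ᵥ v = 0 from hb, Matrix.mulVec_zero] at this
    exact this.symm
  intro x y h
  have := h0 (x - y) (by rw [map_sub, h, sub_self])
  exact sub_eq_zero.mp this

variable (hdim : Module.finrank k L = 2 * Module.finrank k K)

/-- b ↦ δ(b) v as a linear equivalence -/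
noncomputable def S15E (δ : L →ₐ[k] Matrix (Fin 2) (Fin 2) K) {v : Fin 2 → K} (hv : v ≠ 0) :
    L ≃ₗ[k] (Fin 2 → K) :=
  LinearMap.linearEquivOfInjective (S15f δ v) (S15f_inj δ hv)
    (by rw [hdim, S15.finrank_pi2])

lemma S15E_apply (δ : L →ₐ[k] Matrix (Fin 2) (Fin 2) K) {v : Fin 2 → K} (hv : v ≠ 0) (b : L) :
    S15E hdim δ hv b = δ b *ᵥ v := rfl

lemma S15E_symm_eq (δ : L →ₐ[k] Matrix (Fin 2) (Fin 2) K) {v : Fin 2 → K} (hv : v ≠ 0)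
    {w : Fin 2 → K} {b : L} (h : δ b *ᵥ v = w) : (S15E hdim δ hv).symm w = b := by
  rw [LinearEquiv.symm_apply_eq, S15E_apply, h]

end S15aux

section S15aux2
variable {k K L : Type*} [Field k]
  [DivisionRing K] [Algebra k K] [FiniteDimensional k K]
  [DivisionRing L] [Algebra k L] [FiniteDimensional k L]
  (hdim : Module.finrank k L = 2 * Module.finrank k K)

/-- γ associated to (δ, v) -/
noncomputable def S15gamma (δ : L →ₐ[k] Matrix (Fin 2) (Fin 2) K) {v : Fin 2 → K}
    (hv : v ≠ 0) : K →ₐ[k] L where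
  toFun a := (S15E hdim δ hv).symm (fun i => v i * a)
  map_one' := S15E_symm_eq hdim δ hv (by simp [Matrix.one_mulVec])
  map_mul' a a' := by
    apply S15E_symm_eq
    have h1 : δ ((S15E hdim δ hv).symm (fun i => v i * a)) *ᵥ v = fun i => v i * a :=
      (S15E hdim δ hv).apply_symm_apply _
    have h2 : δ ((S15E hdim δ hv).symm (fun i => v i * a')) *ᵥ v = fun i => v i * a' :=
      (S15E hdim δ hv).apply_symm_apply _
    rw [_root_.map_mul, ← Matrix.mulVec_mulVec, h2, S15.mulVec_right, h1]
    funext i; simp [mul_assoc]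
  map_zero' := by
    apply S15E_symm_eq
    funext i
    simp [Matrix.mulVec_zero]
  map_add' a a' := by
    have : (fun i => v i * (a + a')) = (fun i => v i * a) + fun i => v i * a' := by
      funext i; simp [mul_add]
    show (S15E hdim δ hv).symm (fun i => v i * (a + a')) =
      (S15E hdim δ hv).symm (fun i => v i * a) + (S15E hdim δ hv).symm (fun i => v i * a')
    rw [this, map_add]
  commutes' s := by
    apply S15E_symm_eq
    rw [AlgHom.commutes, Algebra.algebraMap_eq_smul_one, Matrix.smul_mulVec,
      Matrix.one_mulVec]
    funext i
    rw [Pi.smul_apply, Algebra.smul_def, Algebra.commutes]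

lemma S15gamma_rel (δ : L →ₐ[k] Matrix (Fin 2) (Fin 2) K) {v : Fin 2 → K} (hv : v ≠ 0) :
    S15Rel δ v (S15gamma hdim δ hv) := by
  intro a b
  have h1 : δ (S15gamma hdim δ hv a) *ᵥ v = fun i => v i * a :=
    (S15E hdim δ hv).apply_symm_apply _
  rw [_root_.map_mul, ← Matrix.mulVec_mulVec, h1, S15.mulVec_right]

include hdim in
/-- uniqueness of γ up to conjugation -/
lemma S15gamma_unique (δ : L →ₐ[k] Matrix (Fin 2) (Fin 2) K) {v w : Fin 2 → K}
    (hv : v ≠ 0) (hw : w ≠ 0) {γ γ' : K →ₐ[k] L}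
    (h : S15Rel δ v γ) (h' : S15Rel δ w γ') :
    ∃ c : Lˣ, ∀ a : K, γ' a = c.val * γ a * (c⁻¹).val := by
  set b₀ : L := (S15E hdim δ hv).symm w with hb₀def
  have hb₀ : δ b₀ *ᵥ v = w := (S15E hdim δ hv).apply_symm_apply w
  have hb₀ne : b₀ ≠ 0 := by
    intro h0
    apply hw
    rw [← hb₀, h0, map_zero, Matrix.zero_mulVec]
  refine ⟨Units.mk0 b₀ hb₀ne, fun a => ?_⟩
  have key : γ' a * b₀ = b₀ * γ a := by
    apply S15f_inj δ hv
    show δ (γ' a * b₀) *ᵥ v = δ (b₀ * γ a) *ᵥ v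
    rw [_root_.map_mul, ← Matrix.mulVec_mulVec, hb₀]
    have h'1 := h' a 1
    simp only [one_mul, _root_.map_one, Matrix.one_mulVec] at h'1
    rw [← h'1, ← h a b₀, hb₀]
  rw [Units.val_inv_eq_inv_val, Units.val_mk0]
  rw [eq_comm, mul_inv_eq_iff_eq_mul₀ hb₀ne, ← key]
end S15aux2

section S15main
variable {k K L : Type*} [Field k]
  [DivisionRing K] [Algebra k K] [FiniteDimensional k K]
  [DivisionRing L] [Algebra k L] [FiniteDimensional k L]
  (hdim : Module.finrank k L = 2 * Module.finrank k K)

include hdim in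
/-- half of the main lemma : an intertwining matrix -/
lemma S15key (δ δ' : L →ₐ[k] Matrix (Fin 2) (Fin 2) K) {v v' : Fin 2 → K}
    (hv : v ≠ 0) (hv' : v' ≠ 0) {γ γ' : K →ₐ[k] L}
    (h : S15Rel δ v γ) (h' : S15Rel δ' v' γ') (c : Lˣ)
    (hc : ∀ a : K, γ' a = c.val * γ a * (c⁻¹).val) :
    ∃ M : Matrix (Fin 2) (Fin 2) K,
      (∀ b : L, M *ᵥ (δ b *ᵥ v) = δ' (b * (c⁻¹).val) *ᵥ v') ∧
      (∀ b : L, M * δ b = δ' b * M) := by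
  set β : (Fin 2 → K) → L := fun w => (S15E hdim δ hv).symm w with hβ
  have hβ1 : ∀ w, δ (β w) *ᵥ v = w := fun w => (S15E hdim δ hv).apply_symm_apply w
  have hβ2 : ∀ b, β (δ b *ᵥ v) = b := fun b => S15E_symm_eq hdim δ hv rfl
  set g : (Fin 2 → K) → (Fin 2 → K) := fun w => δ' (β w * (c⁻¹).val) *ᵥ v' with hg
  -- g is additive
  have gadd : ∀ w w', g (w + w') = g w + g w' := by
    intro w w'
    have : β (w + w') = β w + β w' := map_add _ _ _
    rw [hg]
    simp only [this, add_mul, map_add, Matrix.add_mulVec]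
  -- g is right-K-linear
  have gsmul : ∀ w a, g (fun i => w i * a) = fun i => g w i * a := by
    intro w a
    have hβa : β (fun i => w i * a) = β w * γ a := by
      apply S15E_symm_eq
      rw [← h a (β w), hβ1]
    have hcomm : γ a * (c⁻¹).val = (c⁻¹).val * γ' a := by
      rw [hc a]
      simp only [← mul_assoc, Units.inv_mul, one_mul]
    show δ' (β (fun i => w i * a) * (c⁻¹).val) *ᵥ v'
        = fun i => (δ' (β w * (c⁻¹).val) *ᵥ v') i * a
    rw [h' a (β w * (c⁻¹).val), hβa, mul_assoc, hcomm, ← mul_assoc]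
  set M : Matrix (Fin 2) (Fin 2) K :=
    Matrix.of (fun i j => g (Pi.single j 1) i) with hM
  have hMg : ∀ w, M *ᵥ w = g w := by
    intro w
    have hw : w = (fun i => (Pi.single (0 : Fin 2) (1:K) : Fin 2 → K) i * w 0) +
        (fun i => (Pi.single (1 : Fin 2) (1:K) : Fin 2 → K) i * w 1) := by
      funext i; fin_cases i <;> simp [Pi.single_apply]
    calc M *ᵥ w = fun i => g (Pi.single 0 1) i * w 0 + g (Pi.single 1 1) i * w 1 := by
          funext i
          simp [hM, Matrix.mulVec, dotProduct, Fin.sum_univ_two]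
      _ = g w := by
          conv_rhs => rw [hw]
          rw [gadd, gsmul, gsmul]
          funext i; simp
  -- intertwining
  have hint : ∀ b w, g (δ b *ᵥ w) = δ' b *ᵥ g w := by
    intro b w
    have hβb : β (δ b *ᵥ w) = b * β w := by
      apply S15E_symm_eq
      rw [_root_.map_mul, ← Matrix.mulVec_mulVec, hβ1]
    rw [hg]
    simp only [hβb, mul_assoc]
    rw [_root_.map_mul, ← Matrix.mulVec_mulVec]
  refine ⟨M, fun b => ?_, fun b => ?_⟩
  · rw [hMg, hg]; simp only [hβ2]
  · apply S15.mulVec_ext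
    intro x
    rw [← Matrix.mulVec_mulVec, ← Matrix.mulVec_mulVec, hMg, hMg, hint]

include hdim in
/-- Part 1: similar γ implies similar δ. -/
lemma S15part1 (δ δ' : L →ₐ[k] Matrix (Fin 2) (Fin 2) K) {v v' : Fin 2 → K}
    (hv : v ≠ 0) (hv' : v' ≠ 0) {γ γ' : K →ₐ[k] L}
    (h : S15Rel δ v γ) (h' : S15Rel δ' v' γ')
    (hsim : ∃ c : Lˣ, ∀ a : K, γ' a = c.val * γ a * (c⁻¹).val) :
    ∃ X : (Matrix (Fin 2) (Fin 2) K)ˣ, ∀ b : L, δ' b = X.val * δ b * (X⁻¹).val := by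
  obtain ⟨c, hc⟩ := hsim
  obtain ⟨M, hM1, hM2⟩ := S15key hdim δ δ' hv hv' h h' c hc
  have hc' : ∀ a : K, γ a = (c⁻¹).val * γ' a * ((c⁻¹)⁻¹).val := by
    intro a
    rw [inv_inv, hc a]
    simp only [← mul_assoc, Units.inv_mul, one_mul]
    rw [mul_assoc, Units.inv_mul, mul_one]
  obtain ⟨N, hN1, hN2⟩ := S15key hdim δ' δ hv' hv h' h c⁻¹ hc'
  rw [inv_inv] at hN1
  have hMN : M * N = 1 := by
    apply S15.mulVec_ext
    intro x
    obtain ⟨b, hb⟩ : ∃ b, δ' b *ᵥ v' = x := ⟨(S15E hdim δ' hv').symm x,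
      (S15E hdim δ' hv').apply_symm_apply x⟩
    calc (M * N) *ᵥ x = M *ᵥ (N *ᵥ (δ' b *ᵥ v')) := by rw [hb, Matrix.mulVec_mulVec]
      _ = M *ᵥ (δ (b * c.val) *ᵥ v) := by rw [hN1 b]
      _ = δ' ((b * c.val) * (c⁻¹).val) *ᵥ v' := hM1 _
      _ = 1 *ᵥ x := by rw [mul_assoc, Units.mul_inv, mul_one, hb, Matrix.one_mulVec]
  have hNM : N * M = 1 := by
    apply S15.mulVec_ext
    intro x
    obtain ⟨b, hb⟩ : ∃ b, δ b *ᵥ v = x := ⟨(S15E hdim δ hv).symm x,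
      (S15E hdim δ hv).apply_symm_apply x⟩
    calc (N * M) *ᵥ x = N *ᵥ (M *ᵥ (δ b *ᵥ v)) := by rw [hb, Matrix.mulVec_mulVec]
      _ = N *ᵥ (δ' (b * (c⁻¹).val) *ᵥ v') := by rw [hM1 b]
      _ = δ ((b * (c⁻¹).val) * c.val) *ᵥ v := hN1 _
      _ = 1 *ᵥ x := by rw [mul_assoc, Units.inv_mul, mul_one, hb, Matrix.one_mulVec]
  refine ⟨⟨M, N, hMN, hNM⟩, fun b => ?_⟩
  show δ' b = M * δ b * N
  calc δ' b = δ' b * (M * N) := by rw [hMN, mul_one]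
    _ = (δ' b * M) * N := by rw [mul_assoc]
    _ = (M * δ b) * N := by rw [hM2 b]
end S15main

section S15exists
variable {k K L : Type*} [Field k]
  [DivisionRing K] [Algebra k K] [FiniteDimensional k K]
  [DivisionRing L] [Algebra k L] [FiniteDimensional k L]
  (hdim : Module.finrank k L = 2 * Module.finrank k K)

include hdim in
/-- Existence of δ associated to a given γ. -/
lemma S15exists_delta (γ : K →ₐ[k] L) :
    ∃ (δ : L →ₐ[k] Matrix (Fin 2) (Fin 2) K) (v : Fin 2 → K), v ≠ 0 ∧ S15Rel δ v γ := by
  have hγinj : Function.Injective γ := by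
    intro x y hxy
    by_contra hne
    have hz : x - y ≠ 0 := sub_ne_zero.mpr hne
    have h0 : γ (x - y) = 0 := by rw [map_sub, hxy, sub_self]
    have : (1 : L) = 0 := by
      rw [← _root_.map_one γ, ← mul_inv_cancel₀ hz, _root_.map_mul, h0, zero_mul]
    exact one_ne_zero this
  -- find u₁ outside the range of γ
  have hrange : Module.finrank k (LinearMap.range γ.toLinearMap) = Module.finrank k K :=
    LinearMap.finrank_range_of_inj hγinj
  have hKpos : 0 < Module.finrank k K := Module.finrank_pos
  have hne_top : LinearMap.range γ.toLinearMap ≠ ⊤ := by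
    intro htop
    rw [htop, finrank_top, hdim] at hrange
    omega
  obtain ⟨u₁, hu₁⟩ : ∃ u₁ : L, u₁ ∉ LinearMap.range γ.toLinearMap := by
    by_contra hall
    push_neg at hall
    exact hne_top (Submodule.eq_top_iff'.mpr hall)
  -- the coordinate equivalence
  set P : (Fin 2 → K) →ₗ[k] L :=
    { toFun := fun x => γ (x 0) + u₁ * γ (x 1)
      map_add' := by
        intro x y
        simp only [Pi.add_apply, map_add, mul_add]
        rw [add_add_add_comm]
      map_smul' := by
        intro s x
        simp only [Pi.smul_apply, _root_.map_smul, RingHom.id_apply, smul_add, mul_smul_comm] } with hP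
  have hPapply : ∀ x, P x = γ (x 0) + u₁ * γ (x 1) := fun x => rfl
  have hPinj : Function.Injective P := by
    have h0 : ∀ x, P x = 0 → x = 0 := by
      intro x hx
      rw [hPapply] at hx
      have hx1 : x 1 = 0 := by
        by_contra h1
        apply hu₁
        refine ⟨-(x 0 * (x 1)⁻¹), ?_⟩
        show γ (-(x 0 * (x 1)⁻¹)) = u₁
        have : u₁ * γ (x 1) = -γ (x 0) := eq_neg_of_add_eq_zero_right hx
        have h2 : u₁ = -γ (x 0) * (γ (x 1))⁻¹ := by
          rw [← this, mul_assoc, mul_inv_cancel₀ (fun hc => h1 (hγinj (by rw [hc, map_zero]))), mul_one]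
        rw [map_neg, _root_.map_mul, map_inv₀, h2, neg_mul]
      have hx0 : x 0 = 0 := by
        rw [hx1, map_zero, mul_zero, add_zero] at hx
        by_contra h0'
        exact h0' (hγinj (by rw [hx, map_zero]))
      funext i; fin_cases i <;> assumption
    intro x y hxy
    have := h0 (x - y) (by rw [map_sub, hxy, sub_self])
    exact sub_eq_zero.mp this
  have hfr : Module.finrank k (Fin 2 → K) = Module.finrank k L := by
    rw [S15.finrank_pi2, hdim]
  set E₂ : (Fin 2 → K) ≃ₗ[k] L := LinearMap.linearEquivOfInjective P hPinj hfr with hE₂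
  have hE₂apply : ∀ x, E₂ x = γ (x 0) + u₁ * γ (x 1) := fun x => rfl
  set coord : L → (Fin 2 → K) := fun b => E₂.symm b with hcoord
  have hcoord1 : ∀ b, E₂ (coord b) = b := fun b => E₂.apply_symm_apply b
  have hcoord2 : ∀ x b, E₂ x = b → coord b = x := by
    intro x b hxb; rw [hcoord]; rw [LinearEquiv.symm_apply_eq]; exact hxb.symm
  have hcoord_add : ∀ b b', coord (b + b') = coord b + coord b' := fun b b' => map_add E₂.symm b b'
  -- right K-action compatibility
  have hcoord_smul : ∀ b a, coord (b * γ a) = fun i => coord b i * a := by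
    intro b a
    apply hcoord2
    rw [hE₂apply]
    have : E₂ (coord b) = γ (coord b 0) + u₁ * γ (coord b 1) := hE₂apply _
    rw [hcoord1] at this
    calc γ (coord b 0 * a) + u₁ * γ (coord b 1 * a)
        = (γ (coord b 0) + u₁ * γ (coord b 1)) * γ a := by
          rw [_root_.map_mul, _root_.map_mul, add_mul, mul_assoc]
      _ = b * γ a := by rw [← this]
  set u : Fin 2 → L := ![1, u₁] with hu
  have hcoord_u : ∀ j, coord (u j) = Pi.single j 1 := by
    intro j
    apply hcoord2
    rw [hE₂apply]
    fin_cases j <;> simp [hu, Pi.single_apply]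
  set D : L → Matrix (Fin 2) (Fin 2) K :=
    fun b₀ => Matrix.of (fun i j => coord (b₀ * u j) i) with hD
  have hDmul : ∀ b₀ b, D b₀ *ᵥ coord b = coord (b₀ * b) := by
    intro b₀ b
    have hb : b = u 0 * γ (coord b 0) + u 1 * γ (coord b 1) := by
      have h2 : u 0 * γ (coord b 0) + u 1 * γ (coord b 1)
          = γ (coord b 0) + u₁ * γ (coord b 1) := by
        rw [hu]; simp
      have h3 : γ (coord b 0) + u₁ * γ (coord b 1) = b := by
        have h4 := hcoord1 b
        rwa [hE₂apply] at h4
      rw [h2, h3]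
    conv_rhs => rw [hb]
    rw [mul_add, ← mul_assoc, ← mul_assoc, hcoord_add, hcoord_smul, hcoord_smul]
    funext i
    simp [hD, Matrix.mulVec, dotProduct, Fin.sum_univ_two]
  have hcoord_surj : ∀ x, ∃ b, coord b = x := fun x => ⟨E₂ x, hcoord2 x (E₂ x) rfl⟩
  set δ : L →ₐ[k] Matrix (Fin 2) (Fin 2) K :=
    { toFun := D
      map_one' := by
        apply S15.mulVec_ext
        intro x
        obtain ⟨b, hb⟩ := hcoord_surj x
        rw [← hb, hDmul, one_mul, Matrix.one_mulVec]
      map_mul' := by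
        intro b₀ b₁
        apply S15.mulVec_ext
        intro x
        obtain ⟨b, hb⟩ := hcoord_surj x
        rw [← hb, ← Matrix.mulVec_mulVec, hDmul, hDmul, hDmul, mul_assoc]
      map_zero' := by
        ext i j
        show coord (0 * u j) i = 0
        have hz : coord (0:L) = 0 := hcoord2 0 0 (map_zero E₂)
        rw [zero_mul, hz]
        rfl
      map_add' := by
        intro b₀ b₁
        ext i j
        show coord ((b₀ + b₁) * u j) i = coord (b₀ * u j) i + coord (b₁ * u j) i
        rw [add_mul, hcoord_add]
        rfl
      commutes' := by
        intro s
        ext i j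
        show coord (algebraMap k L s * u j) i = _
        rw [show algebraMap k L s * u j = u j * γ (algebraMap k K s) from
          (Algebra.commutes s (u j)).trans (by rw [γ.commutes s])]
        simp only [hcoord_smul, hcoord_u, Matrix.algebraMap_matrix_apply, Pi.single_apply]
        by_cases hij : i = j <;> simp [hij] } with hδ
  have hδapply : ∀ b, δ b = D b := fun b => rfl
  refine ⟨δ, coord 1, ?_, ?_⟩
  · intro h0
    apply one_ne_zero (α := L)
    rw [← hcoord1 1, h0, map_zero]
  · intro a b
    rw [hδapply, hδapply, hDmul, hDmul, mul_one, mul_one, ← hcoord_smul]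
end S15exists

section S15transport
variable {k K L : Type*} [Field k]
  [DivisionRing K] [Algebra k K] [FiniteDimensional k K]
  [DivisionRing L] [Algebra k L] [FiniteDimensional k L]

lemma S15transport (δ δ' : L →ₐ[k] Matrix (Fin 2) (Fin 2) K) (v : Fin 2 → K)
    (γ : K →ₐ[k] L) (h : S15Rel δ v γ) (X : (Matrix (Fin 2) (Fin 2) K)ˣ)
    (hX : ∀ b, δ' b = X.val * δ b * (X⁻¹).val) :
    S15Rel δ' (X.val *ᵥ v) γ ∧ (v ≠ 0 → X.val *ᵥ v ≠ 0) := by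
  have hcomm : ∀ b, δ' b * X.val = X.val * δ b := by
    intro b
    rw [hX b, mul_assoc, mul_assoc, Units.inv_mul, mul_one]
  constructor
  · intro a b
    rw [Matrix.mulVec_mulVec, hcomm, ← Matrix.mulVec_mulVec]
    have := congrArg (fun w => X.val *ᵥ w) (h a b)
    rw [S15.mulVec_right] at this
    rw [this, Matrix.mulVec_mulVec, ← hcomm, ← Matrix.mulVec_mulVec]
  · intro hv h0
    apply hv
    have : (X⁻¹).val *ᵥ (X.val *ᵥ v) = v := by
      rw [Matrix.mulVec_mulVec, Units.inv_mul, Matrix.one_mulVec]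
    rw [h0, Matrix.mulVec_zero] at this
    exact this.symm
end S15transport


/-- If `γ, γ̃ : K → L` associated (via nonzero vectors and the identity
`(δ(b)v)·a = δ(b·γ(a))v`) to `δ, δ̃ : L → M₂(K)` are similar, then `δ` and `δ̃` are
similar; consequently `δ ↦ γ` induces a bijection between similarity classes of `k`-algebra
homomorphisms `L → M₂(K)` and similarity classes of `k`-algebra homomorphisms `K → L`. -/
theorem delta_similar_of_gamma_similar_and_bijection_of_classes
    (k K L : Type*) [Field k]
    [DivisionRing K] [Algebra k K] [FiniteDimensional k K]
    [DivisionRing L] [Algebra k L] [FiniteDimensional k L]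
    (hdim : Module.finrank k L = 2 * Module.finrank k K) :
    (∀ (δ δ' : L →ₐ[k] Matrix (Fin 2) (Fin 2) K) (v v' : Fin 2 → K), v ≠ 0 → v' ≠ 0 →
      ∀ (γ γ' : K →ₐ[k] L),
        (∀ (a : K) (b : L), (fun i => ((δ b) *ᵥ v) i * a) = (δ (b * γ a)) *ᵥ v) →
        (∀ (a : K) (b : L), (fun i => ((δ' b) *ᵥ v') i * a) = (δ' (b * γ' a)) *ᵥ v') →
        (∃ c : Lˣ, ∀ a : K, γ' a = c.val * γ a * (c⁻¹).val) →
        ∃ X : (Matrix (Fin 2) (Fin 2) K)ˣ, ∀ b : L, δ' b = X.val * δ b * (X⁻¹).val) ∧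
    ∃ e : Quot (fun δ δ' : L →ₐ[k] Matrix (Fin 2) (Fin 2) K =>
          ∃ X : (Matrix (Fin 2) (Fin 2) K)ˣ, ∀ b : L, δ' b = X.val * δ b * (X⁻¹).val) ≃
        Quot (fun γ γ' : K →ₐ[k] L =>
          ∃ c : Lˣ, ∀ a : K, γ' a = c.val * γ a * (c⁻¹).val),
      ∀ (δ : L →ₐ[k] Matrix (Fin 2) (Fin 2) K) (γ : K →ₐ[k] L),
        (∃ v : Fin 2 → K, v ≠ 0 ∧
          ∀ (a : K) (b : L), (fun i => ((δ b) *ᵥ v) i * a) = (δ (b * γ a)) *ᵥ v) →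
        e (Quot.mk _ δ) = Quot.mk _ γ := by
  constructor
  · intro δ δ' v v' hv hv' γ γ' h h' hsim
    exact S15part1 hdim δ δ' hv hv' h h' hsim
  · set Rδ := fun δ δ' : L →ₐ[k] Matrix (Fin 2) (Fin 2) K =>
      ∃ X : (Matrix (Fin 2) (Fin 2) K)ˣ, ∀ b : L, δ' b = X.val * δ b * (X⁻¹).val with hRδ
    set Rγ := fun γ γ' : K →ₐ[k] L =>
      ∃ c : Lˣ, ∀ a : K, γ' a = c.val * γ a * (c⁻¹).val with hRγ
    have hv₀ : (Pi.single (0 : Fin 2) (1 : K) : Fin 2 → K) ≠ 0 := by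
      intro h0
      have := congrFun h0 0
      simp at this
    set F : (L →ₐ[k] Matrix (Fin 2) (Fin 2) K) → (K →ₐ[k] L) :=
      fun δ => S15gamma hdim δ hv₀ with hF
    have hFrel : ∀ δ, S15Rel δ (Pi.single 0 1) (F δ) := fun δ => S15gamma_rel hdim δ hv₀
    choose Gd Gv hGv hGrel using fun γ : K →ₐ[k] L => S15exists_delta hdim γ
    -- F descends
    have hFwd : ∀ δ δ', Rδ δ δ' → Rγ (F δ) (F δ') := by
      intro δ δ' hδδ'
      obtain ⟨X, hX⟩ := hδδ'
      obtain ⟨htr, hne⟩ := S15transport δ δ' (Pi.single 0 1) (F δ) (hFrel δ) X hX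
      exact S15gamma_unique hdim δ' (hne hv₀) hv₀ htr (hFrel δ')
    have hGwd : ∀ γ γ', Rγ γ γ' → Rδ (Gd γ) (Gd γ') := by
      intro γ γ' hγγ'
      exact S15part1 hdim (Gd γ) (Gd γ') (hGv γ) (hGv γ') (hGrel γ) (hGrel γ') hγγ'
    set Fbar : Quot Rδ → Quot Rγ :=
      Quot.lift (fun δ => Quot.mk Rγ (F δ)) (fun δ δ' h => Quot.sound (hFwd δ δ' h)) with hFbar
    set Gbar : Quot Rγ → Quot Rδ :=
      Quot.lift (fun γ => Quot.mk Rδ (Gd γ)) (fun γ γ' h => Quot.sound (hGwd γ γ' h)) with hGbar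
    have hleft : ∀ q, Gbar (Fbar q) = q := by
      intro q
      induction q using Quot.ind with
      | _ δ =>
        rw [hFbar, hGbar]
        apply Quot.sound
        exact S15part1 hdim (Gd (F δ)) δ (hGv (F δ)) hv₀ (hGrel (F δ)) (hFrel δ)
          ⟨1, by simp⟩
    have hright : ∀ q, Fbar (Gbar q) = q := by
      intro q
      induction q using Quot.ind with
      | _ γ =>
        rw [hFbar, hGbar]
        apply Quot.sound
        exact S15gamma_unique hdim (Gd γ) hv₀ (hGv γ) (hFrel (Gd γ)) (hGrel γ)
    refine ⟨⟨Fbar, Gbar, hleft, hright⟩, ?_⟩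
    intro δ γ ⟨v, hv, hrel⟩
    show Fbar (Quot.mk Rδ δ) = Quot.mk Rγ γ
    rw [hFbar]
    apply Quot.sound
    exact S15gamma_unique hdim δ hv₀ hv (hFrel δ) hrel
end

section
/- Up to conjugacy there is exactly one embedding of the real quaternions ℍ into M₂(ℂ): for every ℝ-algebra homomorphism φ : ℍ → M₂(ℂ) there exists an invertible matrix X ∈ GL₂(ℂ) such that for every quaternion q = a + bi + cj + dk (a, b, c, d ∈ ℝ), writing z = a + bi and w = c + di, one has φ(q) = X · [[z, w], [−w̄, z̄]] · X⁻¹. -/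
/-!
Put `A = φ i` and `B = φ j`; then `A² = B² = -1` and `AB = -BA`. Since `(A - i)(A + i) = 0`, the
matrix `A` has an eigenvector for `i` or for `-i`, and `B` exchanges the two eigenspaces, so there
is a `v ≠ 0` with `Av = iv`. Then `w = -Bv` satisfies `Aw = -iw`, `Bv = -w` and `Bw = v`, so in the
basis `(v, w)` the matrices of `A` and `B` are those of the regular embedding. Two algebra maps
out of `ℍ` agreeing on `i` and `j` are equal, which gives the conjugacy.
-/

open Matrix Complex

theorem Matrix.mul_transpose_of_eq_transpose_of_mul {R m n : Type*} [CommSemiring R] [Fintype m]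
    [Fintype n] {A : Matrix m m R} {u : n → m → R} {M : Matrix n n R}
    (h : ∀ c, A *ᵥ u c = ∑ k, M k c • u k) : A * (of u)ᵀ = (of u)ᵀ * M := by
  ext r c
  simpa [mul_apply, mulVec, dotProduct, Finset.sum_apply, mul_comm] using congrFun (h c) r

section Anticommuting

variable {K : Type*} [Field K]

theorem Matrix.exists_mulVec_eq_smul_of_anticomm {n : Type*} [Fintype n] [DecidableEq n]
    [Nonempty n] {A B : Matrix n n K} {i : K} (hi : i * i = -1) (hA : A * A = -1)
    (hB : B * B = -1) (hAB : A * B = -(B * A)) : ∃ v ≠ 0, A *ᵥ v = i • v := by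
  have hfac : (A - i • 1) * (A + i • 1) = 0 := by
    simp only [sub_mul, mul_add, smul_mul_assoc, mul_smul_comm, one_mul, mul_one]
    linear_combination (norm := module) hA - hi • (1 : Matrix n n K)
  obtain hdet | hdet : (A - i • 1).det = 0 ∨ (A + i • 1).det = 0 := by
    rw [← mul_eq_zero, ← det_mul, hfac, det_zero]
  · obtain ⟨v, hv0, hv⟩ := exists_mulVec_eq_zero_iff.mpr hdet
    exact ⟨v, hv0, by simpa [sub_mulVec, smul_mulVec, sub_eq_zero] using hv⟩
  · obtain ⟨v, hv0, hv⟩ := exists_mulVec_eq_zero_iff.mpr hdet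
    have hAv : A *ᵥ v = -i • v := by
      simpa [add_mulVec, smul_mulVec, add_eq_zero_iff_eq_neg] using hv
    refine ⟨B *ᵥ v, fun hBv => hv0 ?_, ?_⟩
    · simpa [mulVec_mulVec, hB, neg_mulVec] using congrArg (B *ᵥ ·) hBv
    · rw [mulVec_mulVec, hAB, neg_mulVec, ← mulVec_mulVec, hAv, mulVec_smul, neg_smul, neg_neg]

theorem Matrix.exists_units_mul_eq_of_anticomm [NeZero (2 : K)] {A B : Matrix (Fin 2) (Fin 2) K}
    {i : K} (hi : i * i = -1) (hA : A * A = -1) (hB : B * B = -1) (hAB : A * B = -(B * A)) :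
    ∃ X : (Matrix (Fin 2) (Fin 2) K)ˣ,
      A * X.val = X.val * !![i, 0; 0, -i] ∧ B * X.val = X.val * !![0, 1; -1, 0] := by
  obtain ⟨v, hv0, hAv⟩ := exists_mulVec_eq_smul_of_anticomm hi hA hB hAB
  obtain ⟨w, hBv⟩ : ∃ w, B *ᵥ v = -w := ⟨-(B *ᵥ v), (neg_neg _).symm⟩
  have hw : w = -(B *ᵥ v) := by rw [hBv, neg_neg]
  have hBw : B *ᵥ w = v := by
    rw [hw, mulVec_neg, mulVec_mulVec, hB, neg_mulVec, one_mulVec, neg_neg]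
  have hAw : A *ᵥ w = -i • w := by
    rw [hw, mulVec_neg, mulVec_mulVec, hAB, neg_mulVec, neg_neg, ← mulVec_mulVec, hAv,
      mulVec_smul, neg_smul, smul_neg, neg_neg]
  have hw0 : w ≠ 0 := fun h => hv0 (by rw [← hBw, h, mulVec_zero])
  have hi_ne : i ≠ -i := fun h =>
    two_ne_zero (show (2 : K) = 0 by linear_combination -i * h + 2 * hi)
  have hindep : LinearIndependent K ![v, w] :=
    Module.End.eigenvectors_linearIndependent' (toLin' A) ![i, -i]
      (injective_pair_iff_ne.mpr hi_ne) ![v, w] <| Fin.forall_fin_two.mpr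
        ⟨Module.End.hasEigenvector_iff.mpr ⟨Module.End.mem_eigenspace_iff.mpr hAv, hv0⟩,
         Module.End.hasEigenvector_iff.mpr ⟨Module.End.mem_eigenspace_iff.mpr hAw, hw0⟩⟩
  have hX : IsUnit (of ![v, w])ᵀ := linearIndependent_cols_iff_isUnit.mp hindep
  refine ⟨hX.unit, ?_, ?_⟩ <;> rw [IsUnit.unit_spec]
  · exact mul_transpose_of_eq_transpose_of_mul <| Fin.forall_fin_two.mpr
      ⟨by simp [Fin.sum_univ_two, hAv], by simp [Fin.sum_univ_two, hAw]⟩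
  · exact mul_transpose_of_eq_transpose_of_mul <| Fin.forall_fin_two.mpr
      ⟨by simp [Fin.sum_univ_two, hBv], by simp [Fin.sum_univ_two, hBw]⟩

end Anticommuting

namespace Quaternion

def regularBasis : QuaternionAlgebra.Basis (Matrix (Fin 2) (Fin 2) ℂ) (-1 : ℝ) 0 (-1) where
  i := !![I, 0; 0, -I]
  j := !![0, 1; -1, 0]
  k := !![0, I; I, 0]
  i_mul_i := by ext a b; fin_cases a <;> fin_cases b <;> simp
  j_mul_j := by ext a b; fin_cases a <;> fin_cases b <;> simp
  i_mul_j := by ext a b; fin_cases a <;> fin_cases b <;> simp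
  j_mul_i := by ext a b; fin_cases a <;> fin_cases b <;> simp

noncomputable def regularEmbedding : ℍ[ℝ] →ₐ[ℝ] Matrix (Fin 2) (Fin 2) ℂ := regularBasis.liftHom

theorem regularEmbedding_apply (q : ℍ[ℝ]) :
    regularEmbedding q =
      !![(q.re : ℂ) + q.imI * I, (q.imJ : ℂ) + q.imK * I;
         -(starRingEnd ℂ) ((q.imJ : ℂ) + q.imK * I), (starRingEnd ℂ) ((q.re : ℂ) + q.imI * I)] := by
  change regularBasis.lift q = _
  ext a b; fin_cases a <;> fin_cases b <;>
    simp [QuaternionAlgebra.Basis.lift, regularBasis, Algebra.algebraMap_eq_smul_one, add_comm]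

theorem regularEmbedding_i :
    regularEmbedding (QuaternionAlgebra.Basis.self ℝ).i = regularBasis.i :=
  congrArg QuaternionAlgebra.Basis.i (QuaternionAlgebra.lift.symm_apply_apply regularBasis)

theorem regularEmbedding_j :
    regularEmbedding (QuaternionAlgebra.Basis.self ℝ).j = regularBasis.j :=
  congrArg QuaternionAlgebra.Basis.j (QuaternionAlgebra.lift.symm_apply_apply regularBasis)

end Quaternion

open Quaternion in
/-- Up to conjugacy there is exactly one embedding of the real quaternions `ℍ`
into `M₂(ℂ)`: every `ℝ`-algebra homomorphism `ℍ → M₂(ℂ)` is conjugate to the regular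
embedding `a + bi + cj + dk ↦ [[z, w], [-conj w, conj z]]`, `z = a + bi`, `w = c + di`. -/
theorem quaternion_to_complex_matrix_conjugate_to_regular
    (φ : ℍ[ℝ] →ₐ[ℝ] Matrix (Fin 2) (Fin 2) ℂ) :
    ∃ X : (Matrix (Fin 2) (Fin 2) ℂ)ˣ, ∀ q : ℍ[ℝ],
      φ q = X.val *
        !![(q.re : ℂ) + q.imI * Complex.I, (q.imJ : ℂ) + q.imK * Complex.I;
           -((starRingEnd ℂ) ((q.imJ : ℂ) + q.imK * Complex.I)),
           (starRingEnd ℂ) ((q.re : ℂ) + q.imI * Complex.I)] * (X⁻¹).val := by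
  set b := QuaternionAlgebra.lift.symm φ
  have hA : b.i * b.i = -1 := by simp only [b.i_mul_i, neg_smul, one_smul, zero_smul, add_zero]
  have hB : b.j * b.j = -1 := by simp only [b.j_mul_j, neg_smul, one_smul]
  have hAB : b.i * b.j = -(b.j * b.i) := by
    simp only [b.i_mul_j, b.j_mul_i, zero_smul, zero_sub, neg_neg]
  obtain ⟨X, hAX, hBX⟩ := exists_units_mul_eq_of_anticomm I_mul_I hA hB hAB
  have hφ : φ = (MulSemiringAction.toAlgHom ℝ _ (ConjAct.toConjAct X)).comp regularEmbedding := by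
    refine Quaternion.hom_ext ?_ ?_
    · change b.i = ConjAct.toConjAct X • regularEmbedding (QuaternionAlgebra.Basis.self ℝ).i
      rw [regularEmbedding_i, ConjAct.units_smul_def, ConjAct.ofConjAct_toConjAct,
        Units.eq_mul_inv_iff_mul_eq]
      exact hAX
    · change b.j = ConjAct.toConjAct X • regularEmbedding (QuaternionAlgebra.Basis.self ℝ).j
      rw [regularEmbedding_j, ConjAct.units_smul_def, ConjAct.ofConjAct_toConjAct,
        Units.eq_mul_inv_iff_mul_eq]
      exact hBX
  refine ⟨X, fun q => ?_⟩
  rw [hφ, AlgHom.comp_apply, MulSemiringAction.toAlgHom_apply, ConjAct.units_smul_def,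
    ConjAct.ofConjAct_toConjAct, regularEmbedding_apply]
end

section
/- Let k be a field and F, D₁, D₂ division rings which are finite-dimensional k-algebras with dim_k D₁ = dim_k D₂ = dim_k F. Let φ : D₁ × D₂ → M₂(F) be an injective unital homomorphism of k-algebras. Then there exist an invertible matrix b ∈ GL₂(F) and k-algebra isomorphisms f₁ : D₁ → F and f₂ : D₂ → F such that b · φ(x, y) · b⁻¹ is the diagonal matrix [[f₁(x), 0], [0, f₂(y)]] for all (x, y) ∈ D₁ × D₂; in particular, φ is similar to the canonical embedding F × F → M₂(F) after identifying D₁ and D₂ with F. -/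
/-!
The idempotent `e = φ (1, 0)` is neither `0` nor `1`, so a nonzero row of `e` and a nonzero row
of `1 - e` form a basis of row vectors in which `e` becomes `diag(1, 0)`. As `(1, 0)` is central,
every conjugated `φ z` commutes with `diag(1, 0)` and is therefore diagonal; its two diagonal
entries are `k`-algebra maps `D₁ → F` and `D₂ → F`. These are injective because `D₁`, `D₂` are
division rings, hence bijective by the dimension count.
-/

open Matrix

theorem Matrix.isUnit_of_linearIndependent_rows {F n : Type*} [DivisionRing F] [Fintype n]
    [DecidableEq n] {A : Matrix n n F} (hA : LinearIndependent F A.row) : IsUnit A := by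
  have hspan := hA.span_eq_top_of_card_eq_finrank' (by simp)
  obtain ⟨B, hBA⟩ := vecMul_surjective_iff_exists_left_inverse.mp fun y => by
    obtain ⟨c, hc⟩ := (Submodule.mem_span_range_iff_exists_fun F).mp (hspan ▸ Submodule.mem_top)
    exact ⟨c, (vecMul_eq_sum c A).trans hc⟩
  exact IsUnit.of_mul_eq_one_right B hBA

theorem Matrix.exists_conj_eq_of_isIdempotentElem_fin_two {F : Type*} [DivisionRing F]
    {e : Matrix (Fin 2) (Fin 2) F} (he : IsIdempotentElem e) (he₀ : e ≠ 0) (he₁ : e ≠ 1) :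
    ∃ b : (Matrix (Fin 2) (Fin 2) F)ˣ, b.val * e * b⁻¹.val = !![1, 0; 0, 0] := by
  obtain ⟨i, hv⟩ : ∃ i, e i ≠ 0 := by
    by_contra! h
    exact he₀ (funext h)
  obtain ⟨j, hw⟩ : ∃ j, (1 - e) j ≠ 0 := by
    by_contra! h
    exact he₁ (sub_eq_zero.mp (funext h)).symm
  have hve : e i ᵥ* e = e i := by rw [← mul_apply_eq_vecMul, he.eq]
  have hwe : (1 - e) j ᵥ* e = 0 := by
    rw [← mul_apply_eq_vecMul, sub_mul, one_mul, he.eq, sub_self]; rfl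
  set P : Matrix (Fin 2) (Fin 2) F := of ![e i, (1 - e) j]
  have hP : LinearIndependent F P.row := by
    refine LinearIndependent.pair_iff.mpr fun s t hst => ?_
    have hs : s • e i = 0 := by
      simpa [add_vecMul, smul_vecMul, hve, hwe] using congrArg (· ᵥ* e) hst
    have hs : s = 0 := (smul_eq_zero.mp hs).resolve_right hv
    subst hs
    exact ⟨rfl, (smul_eq_zero.mp (by simpa using hst)).resolve_right hw⟩
  refine ⟨(isUnit_of_linearIndependent_rows hP).unit, ?_⟩
  rw [Units.mul_inv_eq_iff_eq_mul]
  ext r c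
  rw [IsUnit.unit_spec, mul_apply_eq_vecMul]
  fin_cases r
  · exact (congrFun hve c).trans (by simp [P, mul_apply])
  · exact (congrFun hwe c).trans (by simp [P, mul_apply])

theorem Matrix.isDiag_of_commute_fin_two {R : Type*} [NonAssocSemiring R]
    {M : Matrix (Fin 2) (Fin 2) R} (hM : Commute !![1, 0; 0, 0] M) : M.IsDiag := by
  have h := hM.eq
  rw [eta_fin_two M, mul_fin_two, mul_fin_two] at h
  intro i j hij
  fin_cases i <;> fin_cases j
  · exact absurd rfl hij
  · simpa using (congrFun (congrFun h 0) 1)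
  · simpa using (congrFun (congrFun h 1) 0).symm
  · exact absurd rfl hij

namespace AlgHom

variable {R A B C : Type*} [CommSemiring R] [Semiring A] [Semiring B] [Semiring C]
  [Algebra R A] [Algebra R B] [Algebra R C]

theorem map_prod_eq_map_fst_zero (g : A × B →ₐ[R] C) (hg : g (0, 1) = 0) (a : A) (b : B) :
    g (a, b) = g (a, 0) := by
  have hb : g (0, b) = 0 :=
    calc g (0, b) = g ((0, b) * (0, 1)) := by simp
      _ = 0 := by rw [map_mul, hg, mul_zero]
  calc g (a, b) = g ((a, 0) + (0, b)) := by simp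
    _ = g (a, 0) := by rw [map_add, hb, add_zero]

def compInl (g : A × B →ₐ[R] C) (hg : g (0, 1) = 0) : A →ₐ[R] C where
  toFun a := g (a, 0)
  map_one' := by rw [← g.map_prod_eq_map_fst_zero hg 1 1]; exact g.map_one
  map_mul' a a' := by rw [← map_mul, Prod.mk_mul_mk, zero_mul]
  map_zero' := g.map_zero
  map_add' a a' := by rw [← map_add, Prod.mk_add_mk, zero_add]
  commutes' r := by
    rw [← g.map_prod_eq_map_fst_zero hg _ (algebraMap R B r)]; exact g.commutes r

theorem compInl_apply_fst (g : A × B →ₐ[R] C) (hg : g (0, 1) = 0) (z : A × B) :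
    g.compInl hg z.1 = g z :=
  (g.map_prod_eq_map_fst_zero hg z.1 z.2).symm

variable {n S : Type*} [Fintype n] [DecidableEq n] [Semiring S] [Algebra R S]

def diagEntry (ψ : A →ₐ[R] Matrix n n S) (hψ : ∀ a, (ψ a).IsDiag) (i : n) : A →ₐ[R] S where
  toFun a := ψ a i i
  map_one' := by simp
  map_mul' a a' := by
    rw [map_mul, ← (hψ a).diagonal_diag, ← (hψ a').diagonal_diag, diagonal_mul_diagonal]
    simp
  map_zero' := by simp
  map_add' a a' := by simp
  commutes' r := by simp [algebraMap_matrix_apply]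

@[simp]
theorem diagEntry_apply (ψ : A →ₐ[R] Matrix n n S) (hψ : ∀ a, (ψ a).IsDiag) (i : n) (a : A) :
    ψ.diagEntry hψ i a = ψ a i i :=
  rfl

theorem bijective_of_finrank_eq {k D F : Type*} [Field k] [DivisionRing D] [Ring F]
    [Nontrivial F] [Algebra k D] [Algebra k F] [FiniteDimensional k D] [FiniteDimensional k F]
    (f : D →ₐ[k] F) (h : Module.finrank k D = Module.finrank k F) : Function.Bijective f :=
  ⟨f.toRingHom.injective, (LinearMap.injective_iff_surjective_of_finrank_eq_finrank
    (f := f.toLinearMap) h).mp f.toRingHom.injective⟩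

end AlgHom

/-- If `F, D₁, D₂` are division rings, finite-dimensional over a field `k`, of
equal `k`-dimension, then every injective unital `k`-algebra homomorphism
`D₁ × D₂ → M₂(F)` is conjugate to the canonical diagonal embedding, after identifying
`D₁` and `D₂` with `F` by suitable `k`-algebra isomorphisms. -/
theorem prod_division_rings_to_matrix_conjugate_to_canonical
    (k F D₁ D₂ : Type*) [Field k]
    [DivisionRing F] [Algebra k F] [FiniteDimensional k F]
    [DivisionRing D₁] [Algebra k D₁] [FiniteDimensional k D₁]
    [DivisionRing D₂] [Algebra k D₂] [FiniteDimensional k D₂]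
    (h₁ : Module.finrank k D₁ = Module.finrank k F)
    (h₂ : Module.finrank k D₂ = Module.finrank k F)
    (φ : (D₁ × D₂) →ₐ[k] Matrix (Fin 2) (Fin 2) F)
    (hφ : Function.Injective φ) :
    ∃ (b : (Matrix (Fin 2) (Fin 2) F)ˣ) (f₁ : D₁ ≃ₐ[k] F) (f₂ : D₂ ≃ₐ[k] F),
      ∀ (x : D₁) (y : D₂),
        b.val * φ (x, y) * (b⁻¹).val = !![f₁ x, 0; 0, f₂ y] := by
  have he : IsIdempotentElem (φ (1, 0)) := by
    rw [IsIdempotentElem, ← map_mul, Prod.mk_mul_mk, mul_one, mul_zero]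
  have he₀ : φ (1, 0) ≠ 0 := fun h => by simpa using hφ (h.trans (map_zero φ).symm)
  have he₁ : φ (1, 0) ≠ 1 := fun h => by simpa using hφ (h.trans (map_one φ).symm)
  obtain ⟨b, hb⟩ := exists_conj_eq_of_isIdempotentElem_fin_two he he₀ he₁
  let ψ := (MulSemiringAction.toAlgEquiv k _ (ConjAct.toConjAct b)).toAlgHom.comp φ
  have hψ (z : D₁ × D₂) : ψ z = b.val * φ z * (b⁻¹).val := by simp [ψ, ConjAct.units_smul_def]
  have hψ₁₀ : ψ (1, 0) = !![1, 0; 0, 0] := (hψ _).trans hb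
  have hdiag (z : D₁ × D₂) : (ψ z).IsDiag :=
    have hcentral : Commute ((1, 0) : D₁ × D₂) z := by
      ext <;> simp
    isDiag_of_commute_fin_two (hψ₁₀ ▸ hcentral.map ψ)
  have hψ₀₁ : ψ (0, 1) = !![0, 0; 0, 1] := by
    rw [show ((0 : D₁), (1 : D₂)) = 1 - (1, 0) by ext <;> simp, map_sub, map_one, hψ₁₀]
    ext i j; fin_cases i <;> fin_cases j <;> simp
  let g₁ := (ψ.diagEntry hdiag 0).compInl (by simp [hψ₀₁])
  let g₂ := ((ψ.diagEntry hdiag 1).comp ((AlgHom.snd k D₂ D₁).prod (AlgHom.fst k D₂ D₁))).compInl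
    (by simp [hψ₁₀])
  refine ⟨b, .ofBijective g₁ (g₁.bijective_of_finrank_eq h₁),
    .ofBijective g₂ (g₂.bijective_of_finrank_eq h₂), fun x y => ?_⟩
  rw [← hψ, ← (hdiag (x, y)).diagonal_diag, diagonal_fin_two]
  simp [g₁, g₂, AlgHom.compInl_apply_fst _ _ (x, y), AlgHom.compInl_apply_fst _ _ (y, x)]
end
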